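/- arXiv:1605.03306 — 4 statements merged into one kernel-verified Lean document; each statement's English description precedes it below -/
import Mathlib

section
/- Let n be a positive integer, let y ∈ ℝⁿ, let X be an n×p real matrix whose j-th column x_j satisfies ‖x_j‖₂² = n, let λ > 0, and let β ∈ ℝᵖ be a vector whose j-th component is zero. Set z = n⁻¹ (y − Xβ)ᵀ x_j. Then the univariate function t ↦ (2n)⁻¹‖y − X(β + t e_j)‖₂² + Σ_{k=1}^p p_{H,λ}(|β_k + t·1{k=j}|) (where e_j is the j-th standard basis vector) attains its global minimum over t ∈ ℝ at t̂ = z·1{|z| > λ}. -/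
/-- The hard-thresholding penalty `p_{H,λ}(t) = ½(λ² − ((λ−t)₊)²)`. -/
noncomputable def hardPenalty (lam t : ℝ) : ℝ := (lam ^ 2 - (max (lam - t) 0) ^ 2) / 2

lemma key_ht (lam z t : ℝ) (hlam : 0 < lam) :
    (if lam < |z| then z else 0) ^ 2 / 2 - z * (if lam < |z| then z else 0) +
      hardPenalty lam |if lam < |z| then z else 0| ≤
    t ^ 2 / 2 - z * t + hardPenalty lam |t| := by
  unfold hardPenalty
  split_ifs with h
  · have hmaxz : max (lam - |z|) 0 = 0 := max_eq_right (by linarith)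
    rw [hmaxz]
    rcases le_total (lam - |t|) 0 with h2 | h2
    · rw [max_eq_right h2]
      nlinarith [sq_nonneg (t - z), sq_abs z]
    · rw [max_eq_left h2]
      nlinarith [sq_nonneg (lam - |z|), le_abs_self (z * t), abs_mul z t,
        abs_nonneg t, abs_nonneg z, sq_abs t, sq_abs z,
        mul_nonneg (by linarith : (0:ℝ) ≤ |z| - lam) (by linarith : (0:ℝ) ≤ lam - |t|)]
  · simp only [abs_zero, sub_zero, mul_zero]
    rw [max_eq_left hlam.le]
    push_neg at h
    rcases le_total (lam - |t|) 0 with h2 | h2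
    · rw [max_eq_right h2]
      nlinarith [sq_nonneg (|t| - lam), le_abs_self (z * t), abs_mul z t, sq_abs t]
    · rw [max_eq_left h2]
      nlinarith [le_abs_self (z * t), abs_mul z t, abs_nonneg t, sq_abs t,
        mul_nonneg (by linarith : (0:ℝ) ≤ lam - |z|) (abs_nonneg t)]

/-- Minimizing the hard-thresholding penalized least squares along one coordinate
gives the hard-thresholding rule `ẑ = z·1{|z| > λ}`. -/
theorem univariate_hard_thresholding_hard_penalty
    (n p : ℕ) (hn : 0 < n) (y : Fin n → ℝ) (X : Matrix (Fin n) (Fin p) ℝ)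
    (j : Fin p) (hcol : ∑ i, (X i j) ^ 2 = (n : ℝ))
    (lam : ℝ) (hlam : 0 < lam) (β : Fin p → ℝ) (hβj : β j = 0) :
    ∀ t : ℝ,
      (fun t : ℝ =>
          (2 * (n : ℝ))⁻¹ *
              ∑ i, (y i - ∑ k, X i k * (β k + if k = j then t else 0)) ^ 2 +
            ∑ k, hardPenalty lam |β k + if k = j then t else 0|)
        (if lam < |(n : ℝ)⁻¹ * ∑ i, (y i - ∑ k, X i k * β k) * X i j|
          then (n : ℝ)⁻¹ * ∑ i, (y i - ∑ k, X i k * β k) * X i j else 0) ≤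
      (fun t : ℝ =>
          (2 * (n : ℝ))⁻¹ *
              ∑ i, (y i - ∑ k, X i k * (β k + if k = j then t else 0)) ^ 2 +
            ∑ k, hardPenalty lam |β k + if k = j then t else 0|) t := by
  intro t
  simp only []
  have hn' : (n : ℝ) ≠ 0 := Nat.cast_ne_zero.mpr hn.ne'
  set r : Fin n → ℝ := fun i => y i - ∑ k, X i k * β k with hr
  set z : ℝ := (n : ℝ)⁻¹ * ∑ i, r i * X i j with hz
  -- rewrite the objective as C + g t
  have hF : ∀ s : ℝ,
      (2 * (n : ℝ))⁻¹ *
          ∑ i, (y i - ∑ k, X i k * (β k + if k = j then s else 0)) ^ 2 +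
        ∑ k, hardPenalty lam |β k + if k = j then s else 0| =
      ((2 * (n : ℝ))⁻¹ * ∑ i, (r i) ^ 2 +
        ∑ k ∈ Finset.univ.erase j, hardPenalty lam |β k|) +
      (s ^ 2 / 2 - z * s + hardPenalty lam |s|) := by
    intro s
    have hsum : ∀ i, (y i - ∑ k, X i k * (β k + if k = j then s else 0)) ^ 2 =
        (r i) ^ 2 - (2 * s) * (r i * X i j) + s ^ 2 * (X i j) ^ 2 := by
      intro i
      have : ∑ k, X i k * (β k + if k = j then s else 0) =
          (∑ k, X i k * β k) + X i j * s := by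
        simp [mul_add, Finset.sum_add_distrib, mul_ite, mul_zero,
          Finset.sum_ite_eq', Finset.mem_univ]
      rw [this, hr]; ring
    have hsq : ∑ i, (y i - ∑ k, X i k * (β k + if k = j then s else 0)) ^ 2 =
        ∑ i, (r i) ^ 2 - (2 * s) * (∑ i, r i * X i j) + s ^ 2 * (n : ℝ) := by
      simp_rw [hsum]
      rw [Finset.sum_add_distrib, Finset.sum_sub_distrib, ← Finset.mul_sum,
        ← Finset.mul_sum, hcol]
    have hpen : ∑ k, hardPenalty lam |β k + if k = j then s else 0| =
        (∑ k ∈ Finset.univ.erase j, hardPenalty lam |β k|) + hardPenalty lam |s| := by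
      rw [← Finset.sum_erase_add _ _ (Finset.mem_univ j)]
      congr 1
      · refine Finset.sum_congr rfl fun k hk => ?_
        rw [if_neg (Finset.ne_of_mem_erase hk), add_zero]
      · rw [if_pos rfl, hβj, zero_add]
    rw [hsq, hpen]
    have hS : (2 * (n : ℝ))⁻¹ * ((2 * s) * (∑ i, r i * X i j)) = z * s := by
      rw [hz]; field_simp
    have hT : (2 * (n : ℝ))⁻¹ * (s ^ 2 * (n : ℝ)) = s ^ 2 / 2 := by
      field_simp
    rw [mul_add, mul_sub, hS, hT]
    ring
  rw [hF, hF]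
  have := key_ht lam z t hlam
  linarith
end

section
/- Let n ≥ 2, s ≥ 1, let σ > 0 and c₂′ > 0, let X₀ be an n×s real matrix whose columns each have squared Euclidean norm n, and let ε = (ε₁,…,εₙ) be a random vector whose coordinates are independent with each εᵢ ~ N(0, σ²). Then P( max_{1≤j≤s} |n⁻¹ (X₀)_jᵀ ε| > c₂′ √((log n)/n) ) ≤ √(2/π) · c₂′⁻¹ σ s (log n)^{−1/2} · n^{−c₂′²/(2σ²)}, where (X₀)_j denotes the j-th column of X₀. -/
/-!
Since the columns of `X₀` have squared norm `n`, each statistic `n⁻¹ (X₀)ⱼᵀ ε` is exactly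
`N(0, σ²/n)`. Mills' inequality `P(|Z| > a) ≤ √(2/π) (√v / a) exp(-a² / 2v)` for `Z ~ N(0, v)`,
taken at `a = c₂′ √(log n / n)`, bounds each of the `s` events by
`√(2/π) c₂′⁻¹ σ (log n)^{-1/2} n^{-c₂′²/(2σ²)}`, and a union bound over the columns finishes.
-/

open MeasureTheory ProbabilityTheory

open Real Set Filter
open scoped NNReal Topology

namespace ProbabilityTheory

section GaussianSum

variable {Ω ι : Type*} [MeasurableSpace Ω] {P : Measure Ω} [IsProbabilityMeasure P]

lemma iIndepFun.hasLaw_sum_gaussianReal {X : ι → Ω → ℝ} {m : ι → ℝ} {v : ι → ℝ≥0}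
    (hindep : iIndepFun X P) (hX : ∀ i, HasLaw (X i) (gaussianReal (m i) (v i)) P)
    (s : Finset ι) :
    HasLaw (∑ i ∈ s, X i) (gaussianReal (∑ i ∈ s, m i) (∑ i ∈ s, v i)) P := by
  classical
  induction s using Finset.induction_on with
  | empty =>
    refine ⟨aemeasurable_const, ?_⟩
    simp [Pi.zero_def, Measure.map_const, gaussianReal_zero_var]
  | insert i s hi ih =>
    rw [Finset.sum_insert hi, Finset.sum_insert hi, Finset.sum_insert hi, add_comm (X i),
      add_comm (m i), add_comm (v i), ← gaussianReal_conv_gaussianReal]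
    exact (hindep.indepFun_finsetSum_of_notMem₀ (fun j => (hX j).aemeasurable) hi).hasLaw_add
      ih (hX i)

lemma iIndepFun.hasLaw_sum_const_mul_gaussianReal [Fintype ι] {X : ι → Ω → ℝ} {v : ℝ≥0}
    (hindep : iIndepFun X P) (hX : ∀ i, HasLaw (X i) (gaussianReal 0 v) P) (c : ι → ℝ) :
    HasLaw (fun ω => ∑ i, c i * X i ω) (gaussianReal 0 ((∑ i, c i ^ 2).toNNReal * v)) P := by
  have hcX : iIndepFun (fun i ω => c i * X i ω) P :=
    hindep.comp (fun i x => c i * x) fun i => measurable_const_mul (c i)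
  have h := hcX.hasLaw_sum_gaussianReal (fun i => gaussianReal_const_mul (hX i) (c i)) .univ
  rw [Finset.sum_fn] at h
  convert h using 2
  · simp
  · ext
    simp [Finset.sum_mul, Real.coe_toNNReal _ (Finset.sum_nonneg fun i _ => sq_nonneg (c i))]

end GaussianSum

lemma gaussianPDFReal_zero_apply (v : ℝ≥0) (x : ℝ) :
    gaussianPDFReal 0 v x = (√(2 * π * v))⁻¹ * rexp (-(2 * v : ℝ)⁻¹ * x ^ 2) := by
  rw [gaussianPDFReal, sub_zero, neg_div, neg_mul, div_eq_inv_mul]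

lemma hasDerivAt_gaussianPDFReal_zero (v : ℝ≥0) (x : ℝ) :
    HasDerivAt (gaussianPDFReal 0 v) (-(x / v) * gaussianPDFReal 0 v x) x := by
  rw [funext (gaussianPDFReal_zero_apply v)]
  refine ((((hasDerivAt_pow 2 x).const_mul (-(2 * v : ℝ)⁻¹)).exp).const_mul
    (√(2 * π * v))⁻¹).congr_deriv ?_
  dsimp only
  rcases eq_or_ne (v : ℝ) 0 with hv | hv
  · simp [hv]
  · field_simp
    ring

lemma integrable_mul_gaussianPDFReal_zero (v : ℝ≥0) :
    Integrable (fun x => x * gaussianPDFReal 0 v x) := by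
  rcases eq_or_ne v 0 with rfl | hv
  · simp
  have hb : 0 < (2 * v : ℝ)⁻¹ := by positivity
  simp_rw [gaussianPDFReal_zero_apply, mul_left_comm _ (√(2 * π * v))⁻¹]
  exact (integrable_mul_exp_neg_mul_sq hb).const_mul _

lemma tendsto_gaussianPDFReal_zero_atTop {v : ℝ≥0} (hv : v ≠ 0) :
    Tendsto (gaussianPDFReal 0 v) atTop (𝓝 0) := by
  have hb : -(2 * v : ℝ)⁻¹ < 0 := neg_neg_of_pos (by positivity)
  rw [funext (gaussianPDFReal_zero_apply v)]
  simpa using (tendsto_exp_atBot.comp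
    ((tendsto_pow_atTop two_ne_zero).const_mul_atTop_of_neg hb)).const_mul (√(2 * π * v))⁻¹

lemma integral_Ioi_mul_gaussianPDFReal_zero {v : ℝ≥0} (hv : v ≠ 0) (a : ℝ) :
    ∫ x in Ioi a, x * gaussianPDFReal 0 v x = v * gaussianPDFReal 0 v a := by
  have hderiv : ∀ x ∈ Ici a, HasDerivAt (fun y => -(v * gaussianPDFReal 0 v y))
      (x * gaussianPDFReal 0 v x) x := fun x _ => by
    refine ((hasDerivAt_gaussianPDFReal_zero v x).const_mul (v : ℝ)).neg.congr_deriv ?_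
    have : (v : ℝ) ≠ 0 := by exact_mod_cast hv
    field_simp
  have hlim : Tendsto (fun y => -(v * gaussianPDFReal 0 v y)) atTop (𝓝 0) := by
    simpa using ((tendsto_gaussianPDFReal_zero_atTop hv).const_mul (v : ℝ)).neg
  rw [integral_Ioi_of_hasDerivAt_of_tendsto' hderiv
    (integrable_mul_gaussianPDFReal_zero v).integrableOn hlim]
  ring

/-- Mills' inequality: on `(a, ∞)` the density is at most `(x / a) φ(x)`, and `x φ(x) = -v φ'(x)`
integrates explicitly. -/
lemma measureReal_gaussianReal_Ioi_le {v : ℝ≥0} (hv : v ≠ 0) {a : ℝ} (ha : 0 < a) :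
    (gaussianReal 0 v).real (Ioi a) ≤ v / a * gaussianPDFReal 0 v a := by
  have hint : IntegrableOn (fun x => a⁻¹ * (x * gaussianPDFReal 0 v x)) (Ioi a) :=
    ((integrable_mul_gaussianPDFReal_zero v).const_mul _).integrableOn
  rw [measureReal_def, gaussianReal_apply_eq_integral 0 hv, ENNReal.toReal_ofReal
    (setIntegral_nonneg measurableSet_Ioi fun x _ => gaussianPDFReal_nonneg 0 v x)]
  calc ∫ x in Ioi a, gaussianPDFReal 0 v x
      ≤ ∫ x in Ioi a, a⁻¹ * (x * gaussianPDFReal 0 v x) := by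
        refine setIntegral_mono_on (integrable_gaussianPDFReal 0 v).integrableOn hint
          measurableSet_Ioi fun x (hx : a < x) => ?_
        rw [← mul_assoc]
        exact le_mul_of_one_le_left (gaussianPDFReal_nonneg 0 v x)
          ((one_le_inv_mul₀ ha).mpr hx.le)
    _ = v / a * gaussianPDFReal 0 v a := by
        rw [integral_const_mul, integral_Ioi_mul_gaussianPDFReal_zero hv]
        ring

lemma measureReal_gaussianReal_abs_gt_le {v : ℝ≥0} (hv : v ≠ 0) {a : ℝ} (ha : 0 < a) :
    (gaussianReal 0 v).real {x | a < |x|} ≤ √(2 / π) * (√v / a) * rexp (-a ^ 2 / (2 * v)) := by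
  have hsplit : {x : ℝ | a < |x|} = (fun x => -x) ⁻¹' Ioi a ∪ Ioi a := by
    ext x
    simp [lt_abs, lt_neg, or_comm]
  have hsymm : (gaussianReal 0 v).real ((fun x => -x) ⁻¹' Ioi a) =
      (gaussianReal 0 v).real (Ioi a) := by
    rw [← map_measureReal_apply measurable_neg measurableSet_Ioi, gaussianReal_map_neg, neg_zero]
  have hv' : (0 : ℝ) < v := by positivity
  calc (gaussianReal 0 v).real {x | a < |x|}
      ≤ 2 * (v / a * gaussianPDFReal 0 v a) := by
        rw [hsplit, two_mul]
        refine (measureReal_union_le _ _).trans ?_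
        rw [hsymm]
        gcongr <;> exact measureReal_gaussianReal_Ioi_le hv ha
    _ = √(2 / π) * (√v / a) * rexp (-a ^ 2 / (2 * v)) := by
        rw [gaussianPDFReal, sub_zero, sqrt_mul (by positivity), sqrt_mul zero_le_two,
          sqrt_div zero_le_two]
        field_simp
        rw [sq_sqrt zero_le_two, sq_sqrt hv'.le]

lemma measureReal_gaussianReal_abs_gt_sqrt_log_le {n σ c : ℝ} (hn : 1 < n) (hσ : 0 < σ)
    (hc : 0 < c) {v : ℝ≥0} (hv : (v : ℝ) = σ ^ 2 / n) :
    (gaussianReal 0 v).real {x | c * √(log n / n) < |x|} ≤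
      √(2 / π) * c⁻¹ * σ / √(log n) * n ^ (-(c ^ 2) / (2 * σ ^ 2)) := by
  have hn₀ : 0 < n := zero_lt_one.trans hn
  have hlog : 0 < log n := log_pos hn
  have hv₀ : v ≠ 0 := by
    rw [← NNReal.coe_ne_zero, hv]
    positivity
  have hratio : √v / (c * √(log n / n)) = c⁻¹ * σ / √(log n) := by
    rw [hv, sqrt_div' _ hn₀.le, sqrt_div hlog.le, sqrt_sq hσ.le]
    field_simp
  have hexp : rexp (-(c * √(log n / n)) ^ 2 / (2 * v)) = n ^ (-(c ^ 2) / (2 * σ ^ 2)) := by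
    rw [rpow_def_of_pos hn₀, hv, mul_pow, sq_sqrt (by positivity)]
    field_simp
  refine (measureReal_gaussianReal_abs_gt_le hv₀ (by positivity)).trans_eq ?_
  rw [hratio, hexp]
  ring

end ProbabilityTheory

theorem noise_event_prob_bound_oracle_general
    {Ω : Type*} [MeasurableSpace Ω] (P : Measure Ω) [IsProbabilityMeasure P]
    (n s : ℕ) (hn : 2 ≤ n)
    (σ c₂' : ℝ) (hσ : 0 < σ) (hc₂' : 0 < c₂')
    (X₀ : Matrix (Fin n) (Fin s) ℝ) (hcols : ∀ j, ∑ i, (X₀ i j) ^ 2 = (n : ℝ))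
    (ε : Ω → Fin n → ℝ)
    (hmeas : ∀ i, Measurable fun ω => ε ω i)
    (hdist : ∀ i, Measure.map (fun ω => ε ω i) P = gaussianReal 0 ⟨σ ^ 2, sq_nonneg σ⟩)
    (hindep : iIndepFun (fun i ω => ε ω i) P) :
    (P {ω | ∃ j, c₂' * Real.sqrt (Real.log n / n) <
        |(n : ℝ)⁻¹ * ∑ i, X₀ i j * ε ω i|}).toReal ≤
      Real.sqrt (2 / Real.pi) * c₂'⁻¹ * σ * s / Real.sqrt (Real.log n) *
        (n : ℝ) ^ (-(c₂' ^ 2) / (2 * σ ^ 2)) := by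
  set t := c₂' * √(log n / n)
  set B := √(2 / π) * c₂'⁻¹ * σ / √(log n) * (n : ℝ) ^ (-(c₂' ^ 2) / (2 * σ ^ 2)) with hB
  have hε : ∀ i, HasLaw (fun ω => ε ω i) (gaussianReal 0 (.mk (σ ^ 2) (sq_nonneg σ))) P :=
    fun i => ⟨(hmeas i).aemeasurable, hdist i⟩
  have hlaw : ∀ j, HasLaw (fun ω => (n : ℝ)⁻¹ * ∑ i, X₀ i j * ε ω i)
      (gaussianReal 0 (.mk (σ ^ 2 / n) (by positivity))) P := fun j => by
    convert gaussianReal_const_mul (hindep.hasLaw_sum_const_mul_gaussianReal hε (X₀ · j))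
      (n : ℝ)⁻¹ using 2
    · simp
    · ext
      simp [hcols j]
      field_simp
  have hcol : ∀ j, P.real {ω | t < |(n : ℝ)⁻¹ * ∑ i, X₀ i j * ε ω i|} ≤ B := fun j => by
    rw [(hlaw j).measureReal_eq (measurableSet_lt measurable_const measurable_abs)]
    exact measureReal_gaussianReal_abs_gt_sqrt_log_le (by exact_mod_cast hn) hσ hc₂' rfl
  calc P.real {ω | ∃ j, t < |(n : ℝ)⁻¹ * ∑ i, X₀ i j * ε ω i|}
      ≤ ∑ j, P.real {ω | t < |(n : ℝ)⁻¹ * ∑ i, X₀ i j * ε ω i|} := by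
        rw [ofPred_exists]
        exact measureReal_iUnion_fintype_le _
    _ ≤ ∑ _j : Fin s, B := Finset.sum_le_sum fun j _ => hcol j
    _ = _ := by
        rw [Finset.sum_const, Finset.card_fin, nsmul_eq_mul, hB]
        ring

/-- Probability bound for the complement of the noise event
`E' = {‖n⁻¹X₀ᵀε‖_∞ ≤ c₂′√((log n)/n)}` for i.i.d. `N(0,σ²)` noise and
columns of `X₀` of squared norm `n` (Lemma 2 of the paper). -/
theorem noise_event_prob_bound_oracle
    {Ω : Type*} [MeasurableSpace Ω] (P : Measure Ω) [IsProbabilityMeasure P]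
    (n s : ℕ) (hn : 2 ≤ n) (hs : 1 ≤ s)
    (σ c₂' : ℝ) (hσ : 0 < σ) (hc₂' : 0 < c₂')
    (X₀ : Matrix (Fin n) (Fin s) ℝ) (hcols : ∀ j, ∑ i, (X₀ i j) ^ 2 = (n : ℝ))
    (ε : Ω → Fin n → ℝ)
    (hmeas : ∀ i, Measurable fun ω => ε ω i)
    (hdist : ∀ i, Measure.map (fun ω => ε ω i) P = gaussianReal 0 ⟨σ ^ 2, sq_nonneg σ⟩)
    (hindep : iIndepFun (fun i ω => ε ω i) P) :
    (P {ω | ∃ j, c₂' * Real.sqrt (Real.log n / n) <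
        |(n : ℝ)⁻¹ * ∑ i, X₀ i j * ε ω i|}).toReal ≤
      Real.sqrt (2 / Real.pi) * c₂'⁻¹ * σ * s / Real.sqrt (Real.log n) *
        (n : ℝ) ^ (-(c₂' ^ 2) / (2 * σ ^ 2)) :=
  noise_event_prob_bound_oracle_general P n s hn σ c₂' hσ hc₂' X₀ hcols ε hmeas hdist hindep
end

section
/- Assume the linear model and hard-thresholding setup of the context. Suppose in addition: (i) the sparse-eigenvalue condition holds with bound c > 0 for sparsity level M, (ii) s = ‖β₀‖₀ satisfies s < M/2, (iii) the noise bound ‖n⁻¹Xᵀε‖_∞ ≤ c₂√((log p̃)/n) holds for some c₂ > 0, and (iv) the regularization parameter satisfies c⁻¹c₂√((2s+1)(log p̃)/n) < λ < b₀, where b₀ = min{|β₀_j| : β₀_j ≠ 0}. Then any global minimizer β̂ of Q over S_{M/2} = {β ∈ ℝᵖ : ‖β‖₀ < M/2} satisfies ‖β̂‖₀ ≤ s. -/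
open scoped Classical

/-- The number of nonzero components `‖β‖₀`. -/
noncomputable def l0norm {p : ℕ} (β : Fin p → ℝ) : ℕ :=
  (Finset.univ.filter fun j => β j ≠ 0).card

/-- The hard-thresholding penalized least squares objective
`Q(β) = (2n)⁻¹‖y − Xβ‖₂² + Σ_j p_{H,λ}(|β_j|)`. -/
noncomputable def hardObj {n p : ℕ} (y : Fin n → ℝ) (X : Matrix (Fin n) (Fin p) ℝ)
    (lam : ℝ) (β : Fin p → ℝ) : ℝ :=
  (2 * (n : ℝ))⁻¹ * ∑ i, (y i - ∑ k, X i k * β k) ^ 2 + ∑ k, hardPenalty lam |β k|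

open Finset

lemma pen_zero {lam : ℝ} (h : 0 ≤ lam) : hardPenalty lam |(0:ℝ)| = 0 := by
  simp [hardPenalty, abs_of_nonneg, max_eq_left, h]

lemma pen_big {lam t : ℝ} (h : lam ≤ t) : hardPenalty lam t = lam ^ 2 / 2 := by
  have : max (lam - t) 0 = 0 := max_eq_right (by linarith)
  simp [hardPenalty, this]

lemma pen_small {lam t : ℝ} (h0 : 0 ≤ t) (h : t ≤ lam) :
    hardPenalty lam t = lam * t - t ^ 2 / 2 := by
  have : max (lam - t) 0 = lam - t := max_eq_left (by linarith)
  rw [hardPenalty, this]; ring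

lemma sum_update_mul {p : ℕ} (x β : Fin p → ℝ) (j : Fin p) (t : ℝ) :
    ∑ k, x k * Function.update β j t k = (∑ k, x k * β k) + x j * (t - β j) := by
  have h : ∀ k, x k * Function.update β j t k
      = x k * β k + (if k = j then x j * (t - β j) else 0) := by
    intro k
    rcases eq_or_ne k j with h | h
    · subst h; simp; ring
    · simp [Function.update_of_ne h, h]
  simp_rw [h, Finset.sum_add_distrib, Finset.sum_ite_eq' Finset.univ j]
  simp

lemma hardObj_update_eq {n p : ℕ} (y : Fin n → ℝ) (X : Matrix (Fin n) (Fin p) ℝ)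
    (hcols : ∀ j, ∑ i, (X i j) ^ 2 = (n : ℝ)) (lam : ℝ) (β : Fin p → ℝ) (j : Fin p) (t : ℝ) :
    hardObj y X lam (Function.update β j t) =
      hardObj y X lam β
      + (2 * (n:ℝ))⁻¹ * ((t - β j) ^ 2 * n
          - 2 * (t - β j) * ∑ i, X i j * (y i - ∑ k, X i k * β k))
      + (hardPenalty lam |t| - hardPenalty lam |β j|) := by
  unfold hardObj
  have h1 : ∀ i, (y i - ∑ k, X i k * Function.update β j t k) ^ 2
      = (y i - ∑ k, X i k * β k) ^ 2
        - 2 * (t - β j) * (X i j * (y i - ∑ k, X i k * β k))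
        + (t - β j) ^ 2 * (X i j) ^ 2 := by
    intro i; rw [sum_update_mul]; ring
  have h2 : ∑ k, hardPenalty lam |Function.update β j t k|
      = (∑ k, hardPenalty lam |β k|) + (hardPenalty lam |t| - hardPenalty lam |β j|) := by
    have h : ∀ k, hardPenalty lam |Function.update β j t k|
        = hardPenalty lam |β k|
          + (if k = j then hardPenalty lam |t| - hardPenalty lam |β j| else 0) := by
      intro k
      rcases eq_or_ne k j with h | h
      · subst h; simp
      · simp [Function.update_of_ne h, h]
    simp_rw [h, Finset.sum_add_distrib, Finset.sum_ite_eq' Finset.univ j]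
    simp
  rw [h2]
  simp_rw [h1]
  rw [Finset.sum_add_distrib, Finset.sum_sub_distrib, ← Finset.mul_sum, ← Finset.mul_sum,
    hcols j]
  ring

lemma pen_sum {p : ℕ} {lam : ℝ} (hlam : 0 ≤ lam) (β : Fin p → ℝ)
    (hbig : ∀ j, β j ≠ 0 → lam ≤ |β j|) :
    ∑ k, hardPenalty lam |β k| = (l0norm β : ℝ) * (lam ^ 2 / 2) := by
  rw [l0norm, ← Finset.sum_filter_add_sum_filter_not Finset.univ (fun j => β j ≠ 0)]
  have h1 : ∑ k ∈ Finset.univ.filter (fun j => β j ≠ 0), hardPenalty lam |β k|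
      = ((Finset.univ.filter fun j => β j ≠ 0).card : ℝ) * (lam ^ 2 / 2) := by
    rw [Finset.sum_congr rfl (fun k hk => pen_big (hbig k (by simpa using hk)))]
    rw [Finset.sum_const, nsmul_eq_mul]
  have h2 : ∑ k ∈ Finset.univ.filter (fun j => ¬ β j ≠ 0), hardPenalty lam |β k| = 0 := by
    refine Finset.sum_eq_zero fun k hk => ?_
    have hk0 : β k = 0 := by simpa using hk
    rw [hk0]; exact pen_zero hlam
  rw [h1, h2, add_zero]

lemma aux_lam2 (c c₂ lam q E S ν : ℝ)
    (h2 : (c₂ * q) * (c₂ * q) < (c * lam) * (c * lam)) (h3 : q ^ 2 = E)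
    (he : (2 * S + 1) * ν ^ 2 = c₂ ^ 2 * E) : (2 * S + 1) * ν ^ 2 < c ^ 2 * lam ^ 2 := by
  nlinarith [h2, h3, he]

lemma aux_l1l2 (x w D : ℝ) (hx : 0 ≤ x) (hw : 0 ≤ w) (hD : 0 ≤ D)
    (h : x ^ 2 ≤ w ^ 2 * D ^ 2) : x ≤ w * D := by
  nlinarith [mul_nonneg hw hD]

lemma aux_final (c ν lam D w S K : ℝ) (hc : 0 < c) (hν : 0 < ν)
    (hS : 0 ≤ S) (hK : S + 1 ≤ K) (hw2 : w ^ 2 = S + K)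
    (hlam2 : (2 * S + 1) * ν ^ 2 < c ^ 2 * lam ^ 2)
    (hfin : c ^ 2 * D ^ 2 / 2 - ν * (w * D) + K * (lam ^ 2 / 2) ≤ S * (lam ^ 2 / 2)) :
    False := by
  have h7 := mul_le_mul_of_nonneg_left hfin
    (le_of_lt (show (0:ℝ) < 2 * c ^ 2 by positivity))
  have e1 : 0 ≤ (c ^ 2 * D - ν * w) ^ 2 := sq_nonneg _
  have hw2' : ν ^ 2 * w ^ 2 = ν ^ 2 * (S + K) := by rw [hw2]
  have e3 : (K - S) * (c ^ 2 * lam ^ 2) ≤ ν ^ 2 * (S + K) := by nlinarith [h7, e1, hw2']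
  have h5 : (K - S) * ((2 * S + 1) * ν ^ 2) < (K - S) * (c ^ 2 * lam ^ 2) :=
    mul_lt_mul_of_pos_left hlam2 (by linarith)
  have h6 : S + K ≤ (K - S) * (2 * S + 1) := by
    nlinarith [mul_nonneg hS (by linarith : (0:ℝ) ≤ K - S - 1)]
  have e5 : (S + K) * ν ^ 2 ≤ (K - S) * (2 * S + 1) * ν ^ 2 :=
    mul_le_mul_of_nonneg_right h6 (sq_nonneg ν)
  nlinarith [e3, h5, e5]

set_option maxHeartbeats 1600000 in
lemma lemmaA
    (n p : ℕ) (hn : 1 ≤ n) (hp' : 2 ≤ max n p)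
    (X : Matrix (Fin n) (Fin p) ℝ)
    (β₀ : Fin p → ℝ) (ε y : Fin n → ℝ)
    (hy : ∀ i, y i = (∑ k, X i k * β₀ k) + ε i)
    (c c₂ M b₀ lam : ℝ) (hc : 0 < c) (hc₂ : 0 < c₂)
    (hSE : ∀ δ : Fin p → ℝ, (l0norm δ : ℝ) < M →
      c * Real.sqrt (∑ j, (δ j) ^ 2) ≤
        (Real.sqrt n)⁻¹ * Real.sqrt (∑ i, (∑ k, X i k * δ k) ^ 2))
    (hs : (l0norm β₀ : ℝ) < M / 2)
    (hnoise : ∀ j, |(n : ℝ)⁻¹ * ∑ i, X i j * ε i| ≤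
      c₂ * Real.sqrt (Real.log (max n p) / n))
    (hb₀ : ∀ j, β₀ j ≠ 0 → b₀ ≤ |β₀ j|)
    (hlam_low : c⁻¹ * c₂ *
      Real.sqrt ((2 * (l0norm β₀ : ℝ) + 1) * Real.log (max n p) / n) < lam)
    (hlam_high : lam < b₀)
    (βhat : Fin p → ℝ) (hmem : (l0norm βhat : ℝ) < M / 2)
    (hmin : ∀ β : Fin p → ℝ, (l0norm β : ℝ) < M / 2 →
      hardObj y X lam βhat ≤ hardObj y X lam β)
    (hbig : ∀ j, βhat j ≠ 0 → lam ≤ |βhat j|) :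
    l0norm βhat ≤ l0norm β₀ := by
  by_contra hcon
  push_neg at hcon
  -- notation
  set L : ℝ := Real.log (max n p) with hL_def
  set ν : ℝ := c₂ * Real.sqrt (L / n) with hν_def
  set sR : ℝ := (l0norm β₀ : ℝ) with hsR
  set kR : ℝ := (l0norm βhat : ℝ) with hkR
  have hn0 : (0:ℝ) < n := by exact_mod_cast hn
  have hL : 0 < L := Real.log_pos (by exact_mod_cast Nat.lt_of_lt_of_le one_lt_two hp')
  have hLn : 0 ≤ L / n := le_of_lt (div_pos hL hn0)
  have hν : 0 < ν := mul_pos hc₂ (Real.sqrt_pos.mpr (div_pos hL hn0))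
  have hν2 : ν ^ 2 = c₂ ^ 2 * (L / n) := by
    rw [hν_def, mul_pow, Real.sq_sqrt hLn]
  have hsR0 : 0 ≤ sR := Nat.cast_nonneg _
  have hks : sR + 1 ≤ kR := by
    rw [hsR, hkR]; exact_mod_cast hcon
  have hlam0 : 0 < lam :=
    lt_of_le_of_lt (by positivity) hlam_low
  -- squared lambda bound
  have hlam2 : (2 * sR + 1) * ν ^ 2 < c ^ 2 * lam ^ 2 := by
    have h1 : c₂ * Real.sqrt ((2 * sR + 1) * L / n) < c * lam := by
      have := mul_lt_mul_of_pos_left hlam_low hc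
      calc c₂ * Real.sqrt ((2 * sR + 1) * L / n)
          = c * (c⁻¹ * c₂ * Real.sqrt ((2 * sR + 1) * L / n)) := by
            field_simp
        _ < c * lam := this
    have h0 : 0 ≤ c₂ * Real.sqrt ((2 * sR + 1) * L / n) := by positivity
    have h2 := mul_self_lt_mul_self h0 h1
    have h3 : (Real.sqrt ((2 * sR + 1) * L / n)) ^ 2 = (2 * sR + 1) * L / n := by
      rw [Real.sq_sqrt]; positivity
    have he : (2 * sR + 1) * ν ^ 2 = c₂ ^ 2 * ((2 * sR + 1) * L / n) := by
      rw [hν2]; ring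
    exact aux_lam2 c c₂ lam _ _ sR ν h2 h3 he
  -- objective values
  set δ : Fin p → ℝ := fun j => β₀ j - βhat j with hδ_def
  set A : Fin n → ℝ := fun i => ∑ k, X i k * δ k with hA_def
  have hAi : ∀ i, A i = (∑ k, X i k * β₀ k) - ∑ k, X i k * βhat k := by
    intro i
    rw [hA_def, ← Finset.sum_sub_distrib]
    exact Finset.sum_congr rfl fun k _ => by rw [hδ_def]; ring
  have hyδ : ∀ i, y i - ∑ k, X i k * βhat k = A i + ε i := by
    intro i; rw [hy i, hAi i]; ring
  have hyε : ∀ i, y i - ∑ k, X i k * β₀ k = ε i := by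
    intro i; rw [hy i]; ring
  have hQ0 : hardObj y X lam β₀ = (2 * (n:ℝ))⁻¹ * (∑ i, ε i ^ 2) + sR * (lam ^ 2 / 2) := by
    rw [hardObj, pen_sum (le_of_lt hlam0) β₀
      (fun j hj => le_of_lt (lt_of_lt_of_le hlam_high (hb₀ j hj)))]
    congr 1
    congr 1
    exact Finset.sum_congr rfl fun i _ => by rw [hyε i]
  have hQh : hardObj y X lam βhat
      = (2 * (n:ℝ))⁻¹ * (∑ i, (A i + ε i) ^ 2) + kR * (lam ^ 2 / 2) := by
    rw [hardObj, pen_sum (le_of_lt hlam0) βhat hbig]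
    congr 1
    congr 1
    exact Finset.sum_congr rfl fun i _ => by rw [hyδ i]
  have main := hmin β₀ hs
  rw [hQ0, hQh] at main
  -- expand the square
  set C : ℝ := ∑ i, A i * ε i with hC_def
  have hexp : ∑ i, (A i + ε i) ^ 2 = (∑ i, A i ^ 2) + 2 * C + ∑ i, ε i ^ 2 := by
    rw [hC_def, Finset.mul_sum, ← Finset.sum_add_distrib, ← Finset.sum_add_distrib]
    exact Finset.sum_congr rfl fun i _ => by ring
  have hd : (2 * (n:ℝ))⁻¹ * ((∑ i, A i ^ 2) + 2 * C + ∑ i, ε i ^ 2)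
      = (2 * (n:ℝ))⁻¹ * (∑ i, A i ^ 2) + (n:ℝ)⁻¹ * C + (2 * (n:ℝ))⁻¹ * ∑ i, ε i ^ 2 := by
    field_simp
  rw [hexp, hd] at main
  have key : (2 * (n:ℝ))⁻¹ * (∑ i, A i ^ 2) + (n:ℝ)⁻¹ * C + kR * (lam ^ 2 / 2)
      ≤ sR * (lam ^ 2 / 2) := by linarith
  -- cross term bound
  have hC2 : (n:ℝ)⁻¹ * C = ∑ j, δ j * ((n:ℝ)⁻¹ * ∑ i, X i j * ε i) := by
    have h1 : (n:ℝ)⁻¹ * C = ∑ i, ∑ j, (n:ℝ)⁻¹ * (X i j * δ j * ε i) := by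
      rw [hC_def, Finset.mul_sum]
      refine Finset.sum_congr rfl fun i _ => ?_
      rw [hA_def]
      simp only []
      rw [Finset.sum_mul, Finset.mul_sum]
    rw [h1, Finset.sum_comm]
    refine Finset.sum_congr rfl fun j _ => ?_
    have h2 : δ j * ((n:ℝ)⁻¹ * ∑ i, X i j * ε i)
        = ∑ i, (n:ℝ)⁻¹ * (X i j * δ j * ε i) := by
      rw [Finset.mul_sum, Finset.mul_sum]
      exact Finset.sum_congr rfl fun i _ => by ring
    exact h2.symm
  have hCb : |(n:ℝ)⁻¹ * C| ≤ ν * ∑ j, |δ j| := by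
    rw [hC2]
    calc |∑ j, δ j * ((n:ℝ)⁻¹ * ∑ i, X i j * ε i)|
        ≤ ∑ j, |δ j * ((n:ℝ)⁻¹ * ∑ i, X i j * ε i)| := Finset.abs_sum_le_sum_abs _ _
      _ ≤ ∑ j, |δ j| * ν := by
          refine Finset.sum_le_sum fun j _ => ?_
          rw [abs_mul]
          exact mul_le_mul_of_nonneg_left (hnoise j) (abs_nonneg _)
      _ = ν * ∑ j, |δ j| := by rw [← Finset.sum_mul]; ring
  -- support of δ
  set T : Finset (Fin p) := Finset.univ.filter (fun j => δ j ≠ 0) with hT_def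
  have hTsub : T ⊆ (Finset.univ.filter fun j => β₀ j ≠ 0) ∪
      (Finset.univ.filter fun j => βhat j ≠ 0) := by
    intro j hj
    have hj' : δ j ≠ 0 := by
      have := Finset.mem_filter.mp (hT_def ▸ hj)
      exact this.2
    simp only [Finset.mem_union, Finset.mem_filter, Finset.mem_univ, true_and]
    by_contra hcontra
    push_neg at hcontra
    apply hj'
    show β₀ j - βhat j = 0
    rw [hcontra.1, hcontra.2]
    ring
  have hTcard : (T.card : ℝ) ≤ sR + kR := by
    have h2 : T.card ≤ l0norm β₀ + l0norm βhat :=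
      le_trans (Finset.card_le_card hTsub) (Finset.card_union_le _ _)
    rw [hsR, hkR]
    exact_mod_cast h2
  set D : ℝ := Real.sqrt (∑ j, δ j ^ 2) with hD_def
  have hD0 : 0 ≤ D := Real.sqrt_nonneg _
  have hD2 : D ^ 2 = ∑ j, δ j ^ 2 := Real.sq_sqrt (by positivity)
  have hkR0 : 0 ≤ kR := Nat.cast_nonneg _
  set w : ℝ := Real.sqrt (sR + kR) with hw_def
  have hw0 : 0 ≤ w := Real.sqrt_nonneg _
  have hw2 : w ^ 2 = sR + kR := Real.sq_sqrt (by positivity)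
  -- ℓ1–ℓ2 bound
  have hl1 : ∑ j, |δ j| ≤ w * D := by
    have h0 : ∑ j, |δ j| = ∑ j ∈ T, |δ j| := by
      symm
      apply Finset.sum_subset (Finset.subset_univ _)
      intro j _ hj
      have hj0 : δ j = 0 := by
        by_contra h
        exact hj (by simp [hT_def, h])
      simp [hj0]
    have hcs : (∑ j ∈ T, 1 * |δ j|) ^ 2 ≤ (∑ _j ∈ T, (1:ℝ) ^ 2) * ∑ j ∈ T, |δ j| ^ 2 :=
      Finset.sum_mul_sq_le_sq_mul_sq T _ _
    have hone : (∑ _j ∈ T, (1:ℝ) ^ 2) = (T.card : ℝ) := by simp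
    have hTle : ∑ j ∈ T, |δ j| ^ 2 ≤ ∑ j, δ j ^ 2 := by
      refine Finset.sum_le_sum_of_subset_of_nonneg (Finset.subset_univ _) ?_ |>.trans ?_
      · intro j _ _; positivity
      · refine le_of_eq (Finset.sum_congr rfl fun j _ => by rw [sq_abs])
    have hsq : (∑ j ∈ T, |δ j|) ^ 2 ≤ (sR + kR) * D ^ 2 := by
      have h1 : (∑ j ∈ T, |δ j|) ^ 2 ≤ (T.card : ℝ) * ∑ j ∈ T, |δ j| ^ 2 := by
        simpa [hone] using hcs
      have h2 : (T.card : ℝ) * ∑ j ∈ T, |δ j| ^ 2 ≤ (sR + kR) * D ^ 2 := by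
        rw [hD2]
        have hnn : 0 ≤ ∑ j ∈ T, |δ j| ^ 2 := by positivity
        exact mul_le_mul hTcard hTle hnn (by positivity)
      linarith
    have habs : 0 ≤ ∑ j ∈ T, |δ j| := Finset.sum_nonneg fun j _ => abs_nonneg _
    rw [h0]
    refine aux_l1l2 _ _ _ habs hw0 hD0 ?_
    rw [hw2]
    linarith [hsq]
  -- sparse eigenvalue bound
  have hδl0 : (l0norm δ : ℝ) < M := by
    have heq : l0norm δ = T.card := rfl
    rw [heq]
    calc (T.card : ℝ) ≤ sR + kR := hTcard
      _ < M / 2 + M / 2 := by linarith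
      _ = M := by ring
  have hSEδ : c * D ≤ (Real.sqrt n)⁻¹ * Real.sqrt (∑ i, A i ^ 2) := hSE δ hδl0
  have hsq2 : c ^ 2 * D ^ 2 ≤ (n:ℝ)⁻¹ * ∑ i, A i ^ 2 := by
    have hSnn : (0:ℝ) ≤ ∑ i, A i ^ 2 := by positivity
    have h1 := mul_self_le_mul_self (by positivity) hSEδ
    have h2 : ((Real.sqrt n)⁻¹ * Real.sqrt (∑ i, A i ^ 2))
        * ((Real.sqrt n)⁻¹ * Real.sqrt (∑ i, A i ^ 2))
        = (n:ℝ)⁻¹ * ∑ i, A i ^ 2 := by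
      have ha : Real.sqrt (n:ℝ) * Real.sqrt (n:ℝ) = (n:ℝ) :=
        Real.mul_self_sqrt (by positivity)
      have hb : Real.sqrt (∑ i, A i ^ 2) * Real.sqrt (∑ i, A i ^ 2) = ∑ i, A i ^ 2 :=
        Real.mul_self_sqrt hSnn
      calc ((Real.sqrt n)⁻¹ * Real.sqrt (∑ i, A i ^ 2))
          * ((Real.sqrt n)⁻¹ * Real.sqrt (∑ i, A i ^ 2))
          = (Real.sqrt n * Real.sqrt n)⁻¹
            * (Real.sqrt (∑ i, A i ^ 2) * Real.sqrt (∑ i, A i ^ 2)) := by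
            rw [mul_inv]; ring
        _ = (n:ℝ)⁻¹ * ∑ i, A i ^ 2 := by rw [ha, hb]
    calc c ^ 2 * D ^ 2 = (c * D) * (c * D) := by ring
      _ ≤ ((Real.sqrt n)⁻¹ * Real.sqrt (∑ i, A i ^ 2))
          * ((Real.sqrt n)⁻¹ * Real.sqrt (∑ i, A i ^ 2)) := h1
      _ = (n:ℝ)⁻¹ * ∑ i, A i ^ 2 := h2
  have hA2 : c ^ 2 * D ^ 2 / 2 ≤ (2 * (n:ℝ))⁻¹ * ∑ i, A i ^ 2 := by
    have heq : (2 * (n:ℝ))⁻¹ * ∑ i, A i ^ 2 = ((n:ℝ)⁻¹ * ∑ i, A i ^ 2) / 2 := by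
      rw [mul_inv]; ring
    rw [heq]; linarith
  have hcross : -(ν * (w * D)) ≤ (n:ℝ)⁻¹ * C := by
    have h1 := neg_abs_le ((n:ℝ)⁻¹ * C)
    have h2 : ν * ∑ j, |δ j| ≤ ν * (w * D) :=
      mul_le_mul_of_nonneg_left hl1 (le_of_lt hν)
    linarith
  have hfinal : c ^ 2 * D ^ 2 / 2 - ν * (w * D) + kR * (lam ^ 2 / 2)
      ≤ sR * (lam ^ 2 / 2) := by linarith
  -- derive the contradiction
  exact aux_final c ν lam D w sR kR hc hν hsR0 hks hw2 hlam2 hfinal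

lemma aux_step_pos (a w lam : ℝ) (ha : 0 < a) (halam : a < lam)
    (fact1 : 0 ≤ a ^ 2 + a * w - lam * a) :
    (lam - a) ^ 2 / 2 - (lam - a) * w + (lam ^ 2 / 2 - (lam * a - a ^ 2 / 2)) ≤ 0 := by
  have hw : lam - a ≤ w := by nlinarith
  nlinarith [mul_nonneg (by linarith : (0:ℝ) ≤ lam - a) (by linarith : (0:ℝ) ≤ w - (lam - a))]

lemma aux_step_neg (a w lam : ℝ) (ha : a < 0) (halam : -lam < a)
    (fact1 : 0 ≤ a ^ 2 + a * w - lam * (-a)) :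
    (-lam - a) ^ 2 / 2 - (-lam - a) * w + (lam ^ 2 / 2 - (lam * (-a) - a ^ 2 / 2)) ≤ 0 := by
  have hw : w ≤ -lam - a := by nlinarith
  nlinarith [mul_nonneg (by linarith : (0:ℝ) ≤ lam + a) (by linarith : (0:ℝ) ≤ -lam - a - w)]

lemma l0_update_zero_le {p : ℕ} (β : Fin p → ℝ) (j : Fin p) :
    l0norm (Function.update β j 0) ≤ l0norm β := by
  apply Finset.card_le_card
  intro k hk
  have hk' : Function.update β j 0 k ≠ 0 := (Finset.mem_filter.mp hk).2
  refine Finset.mem_filter.mpr ⟨Finset.mem_univ _, ?_⟩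
  rcases eq_or_ne k j with h | h
  · subst h; simp at hk'
  · rwa [Function.update_of_ne h] at hk'

lemma l0_update_eq {p : ℕ} (β : Fin p → ℝ) (j : Fin p) {t : ℝ} (ht : t ≠ 0)
    (hj : β j ≠ 0) : l0norm (Function.update β j t) = l0norm β := by
  unfold l0norm
  congr 1
  apply Finset.filter_congr
  intro k _
  rcases eq_or_ne k j with h | h
  · subst h; simp [ht, hj]
  · simp [Function.update_of_ne h]

lemma update_to_lam {n p : ℕ} (y : Fin n → ℝ) (X : Matrix (Fin n) (Fin p) ℝ)
    (hcols : ∀ j, ∑ i, (X i j) ^ 2 = (n : ℝ)) (hn : 1 ≤ n) {lam : ℝ} (hlam : 0 < lam)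
    (M : ℝ) (β : Fin p → ℝ) (hmem : (l0norm β : ℝ) < M / 2)
    (hmin : ∀ γ : Fin p → ℝ, (l0norm γ : ℝ) < M / 2 →
      hardObj y X lam β ≤ hardObj y X lam γ)
    (j : Fin p) (hj0 : β j ≠ 0) (hjs : |β j| < lam) :
    hardObj y X lam (Function.update β j (if 0 < β j then lam else -lam))
      ≤ hardObj y X lam β := by
  have hn0 : (0:ℝ) < n := by exact_mod_cast hn
  set a := β j with ha_def
  set W : ℝ := ∑ i, X i j * (y i - ∑ k, X i k * β k) with hW_def
  set w : ℝ := (n:ℝ)⁻¹ * W with hw_def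
  -- comparison with zeroing out coordinate j
  have hmem0 : (l0norm (Function.update β j 0) : ℝ) < M / 2 :=
    lt_of_le_of_lt (by exact_mod_cast l0_update_zero_le β j) hmem
  have h0 := hmin _ hmem0
  rw [hardObj_update_eq y X hcols lam β j 0] at h0
  have hpa : hardPenalty lam |a| = lam * |a| - |a| ^ 2 / 2 :=
    pen_small (abs_nonneg _) (le_of_lt hjs)
  have habs2 : |a| ^ 2 = a ^ 2 := sq_abs a
  have heq0 : (2 * (n:ℝ))⁻¹ * ((0 - a) ^ 2 * n - 2 * (0 - a) * W)
      = a ^ 2 / 2 + a * w := by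
    rw [hw_def]; field_simp; ring
  rw [heq0, pen_zero (le_of_lt hlam), hpa] at h0
  have fact1 : 0 ≤ a ^ 2 / 2 + a * w - (lam * |a| - a ^ 2 / 2) := by linarith
  -- now the move to ±lam
  rw [hardObj_update_eq y X hcols lam β j _]
  rcases lt_or_gt_of_ne hj0 with hneg | hpos
  · -- a < 0, t = -lam
    have hif : (if 0 < a then lam else -lam) = -lam := if_neg (by linarith)
    rw [hif]
    have habs : |a| = -a := abs_of_neg hneg
    have hpt : hardPenalty lam |(-lam)| = lam ^ 2 / 2 := by
      rw [abs_neg, abs_of_pos hlam]; exact pen_big le_rfl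
    rw [hpt, hpa]
    have heqt : (2 * (n:ℝ))⁻¹ * ((-lam - a) ^ 2 * n - 2 * (-lam - a) * W)
        = (-lam - a) ^ 2 / 2 - (-lam - a) * w := by
      rw [hw_def]; field_simp
    rw [heqt]
    have halam : -lam < a := by
      rw [habs] at hjs; linarith
    have fact1' : 0 ≤ a ^ 2 + a * w - lam * (-a) := by
      rw [habs] at fact1; nlinarith [fact1]
    have := aux_step_neg a w lam hneg halam fact1'
    rw [habs]
    linarith
  · -- a > 0, t = lam
    have hif : (if 0 < a then lam else -lam) = lam := if_pos hpos
    rw [hif]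
    have habs : |a| = a := abs_of_pos hpos
    have hpt : hardPenalty lam |lam| = lam ^ 2 / 2 := by
      rw [abs_of_pos hlam]; exact pen_big le_rfl
    rw [hpt, hpa]
    have heqt : (2 * (n:ℝ))⁻¹ * ((lam - a) ^ 2 * n - 2 * (lam - a) * W)
        = (lam - a) ^ 2 / 2 - (lam - a) * w := by
      rw [hw_def]; field_simp
    rw [heqt]
    have halam : a < lam := by rw [habs] at hjs; linarith
    have fact1' : 0 ≤ a ^ 2 + a * w - lam * a := by
      rw [habs] at fact1; nlinarith [fact1]
    have := aux_step_pos a w lam hpos halam fact1'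
    rw [habs]
    linarith

/-- Sparsity bound `‖β̂‖₀ ≤ s` for any global minimizer of the hard-thresholding
penalized least squares over `S_{M/2}`, on the noise event `E`
(first part of the proof of Theorem 1 of the paper). -/
theorem thresholded_regression_sparsity_bound
    (n p : ℕ) (hn : 1 ≤ n) (hp : 1 ≤ p) (hp' : 2 ≤ max n p)
    (X : Matrix (Fin n) (Fin p) ℝ) (hcols : ∀ j, ∑ i, (X i j) ^ 2 = (n : ℝ))
    (β₀ : Fin p → ℝ) (ε y : Fin n → ℝ)
    (hy : ∀ i, y i = (∑ k, X i k * β₀ k) + ε i)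
    (c c₂ M b₀ lam : ℝ) (hc : 0 < c) (hc₂ : 0 < c₂)
    -- (i) sparse-eigenvalue (robust spark) condition with bound c for sparsity level M
    (hSE : ∀ δ : Fin p → ℝ, (l0norm δ : ℝ) < M →
      c * Real.sqrt (∑ j, (δ j) ^ 2) ≤
        (Real.sqrt n)⁻¹ * Real.sqrt (∑ i, (∑ k, X i k * δ k) ^ 2))
    -- (ii) s = ‖β₀‖₀ < M/2
    (hs : (l0norm β₀ : ℝ) < M / 2)
    -- (iii) noise bound ‖n⁻¹Xᵀε‖_∞ ≤ c₂√((log p̃)/n)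
    (hnoise : ∀ j, |(n : ℝ)⁻¹ * ∑ i, X i j * ε i| ≤
      c₂ * Real.sqrt (Real.log (max n p) / n))
    -- b₀ = min nonzero signal strength
    (hb₀ : ∀ j, β₀ j ≠ 0 → b₀ ≤ |β₀ j|)
    -- (iv) regularization parameter range c⁻¹c₂√((2s+1)(log p̃)/n) < λ < b₀
    (hlam_low : c⁻¹ * c₂ *
      Real.sqrt ((2 * (l0norm β₀ : ℝ) + 1) * Real.log (max n p) / n) < lam)
    (hlam_high : lam < b₀)
    -- β̂ is a global minimizer of Q over S_{M/2}
    (βhat : Fin p → ℝ) (hmem : (l0norm βhat : ℝ) < M / 2)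
    (hmin : ∀ β : Fin p → ℝ, (l0norm β : ℝ) < M / 2 →
      hardObj y X lam βhat ≤ hardObj y X lam β) :
    l0norm βhat ≤ l0norm β₀ := by
  have hlam0 : 0 < lam := lt_of_le_of_lt (by positivity) hlam_low
  suffices H : ∀ m : ℕ, ∀ β : Fin p → ℝ,
      (Finset.univ.filter fun j => β j ≠ 0 ∧ |β j| < lam).card ≤ m →
      (l0norm β : ℝ) < M / 2 →
      (∀ γ : Fin p → ℝ, (l0norm γ : ℝ) < M / 2 →
        hardObj y X lam β ≤ hardObj y X lam γ) →
      l0norm β ≤ l0norm β₀ by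
    exact H _ βhat le_rfl hmem hmin
  intro m
  induction m with
  | zero =>
    intro β hcard hm hmn
    refine lemmaA n p hn hp' X β₀ ε y hy c c₂ M b₀ lam hc hc₂ hSE hs hnoise hb₀
      hlam_low hlam_high β hm hmn ?_
    intro j hj
    by_contra hlt
    push_neg at hlt
    have hjmem : j ∈ Finset.univ.filter fun j => β j ≠ 0 ∧ |β j| < lam :=
      Finset.mem_filter.mpr ⟨Finset.mem_univ _, hj, hlt⟩
    have hempty : (Finset.univ.filter fun j => β j ≠ 0 ∧ |β j| < lam) = ∅ :=
      Finset.card_eq_zero.mp (Nat.le_zero.mp hcard)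
    rw [hempty] at hjmem
    exact absurd hjmem (Finset.notMem_empty j)
  | succ m ih =>
    intro β hcard hm hmn
    by_cases hle : (Finset.univ.filter fun j => β j ≠ 0 ∧ |β j| < lam).card ≤ m
    · exact ih β hle hm hmn
    have hne : (Finset.univ.filter fun j => β j ≠ 0 ∧ |β j| < lam).Nonempty :=
      Finset.card_pos.mp (by omega)
    obtain ⟨j, hjmem⟩ := hne
    obtain ⟨hj0, hjs⟩ : β j ≠ 0 ∧ |β j| < lam := (Finset.mem_filter.mp hjmem).2
    set t : ℝ := if 0 < β j then lam else -lam with ht_def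
    have ht0 : t ≠ 0 := by
      rw [ht_def]; split_ifs <;> [exact ne_of_gt hlam0; exact ne_of_lt (by linarith)]
    have htabs : |t| = lam := by
      rw [ht_def]; split_ifs
      · exact abs_of_pos hlam0
      · rw [abs_neg]; exact abs_of_pos hlam0
    have hQle := update_to_lam y X hcols hn hlam0 M β hm hmn j hj0 hjs
    set β' : Fin p → ℝ := Function.update β j t with hβ'_def
    have hl0eq : l0norm β' = l0norm β := l0_update_eq β j ht0 hj0
    have hm' : (l0norm β' : ℝ) < M / 2 := by rw [hl0eq]; exact hm
    have hmn' : ∀ γ : Fin p → ℝ, (l0norm γ : ℝ) < M / 2 →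
        hardObj y X lam β' ≤ hardObj y X lam γ :=
      fun γ hγ => le_trans hQle (hmn γ hγ)
    have hfilter : (Finset.univ.filter fun k => β' k ≠ 0 ∧ |β' k| < lam)
        = (Finset.univ.filter fun k => β k ≠ 0 ∧ |β k| < lam).erase j := by
      ext k
      rw [Finset.mem_erase, Finset.mem_filter, Finset.mem_filter]
      constructor
      · rintro ⟨-, hk1, hk2⟩
        rcases eq_or_ne k j with h | h
        · subst h
          rw [hβ'_def, Function.update_self, htabs] at hk2
          exact absurd hk2 (lt_irrefl _)
        · rw [hβ'_def, Function.update_of_ne h] at hk1 hk2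
          exact ⟨h, Finset.mem_univ _, hk1, hk2⟩
      · rintro ⟨h, -, hk1, hk2⟩
        refine ⟨Finset.mem_univ _, ?_, ?_⟩
        · rwa [hβ'_def, Function.update_of_ne h]
        · rwa [hβ'_def, Function.update_of_ne h]
    have hsmall' : (Finset.univ.filter fun k => β' k ≠ 0 ∧ |β' k| < lam).card ≤ m := by
      rw [hfilter, Finset.card_erase_of_mem hjmem]
      omega
    calc l0norm β = l0norm β' := hl0eq.symm
      _ ≤ l0norm β₀ := ih β' hsmall' hm' hmn'
end

section
/- Assume the linear model and hard-thresholding setup of the context, with n ≥ 2 and all hypotheses (i)–(v) ensuring model selection consistency, and additionally the noise bound ‖n⁻¹X₀ᵀε‖_∞ ≤ c₂′√((log n)/n) for some c₂′ > 0, where X₀ is the submatrix of X consisting of the columns with indices in supp(β₀). Then any global minimizer β̂ of Q over S_{M/2} = {β ∈ ℝᵖ : ‖β‖₀ < M/2} satisfies, for every q ∈ [1, 2], the estimation bound ‖β̂ − β₀‖_q ≤ 2 c⁻² c₂′ s^{1/q} √((log n)/n), and moreover ‖β̂ − β₀‖_∞ ≤ 2 c⁻² c₂′ √(s (log n)/n).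 -/
open scoped Classical

/-!
Write `δ = β̂ − β₀`, `Uⱼ = n⁻¹ xⱼᵀ ε` and `w = c₂ √(log p̃ / n)`. Comparing `Q(β̂) ≤ Q(β₀)` and
using the sparse eigenvalue condition gives the basic inequality `∑ⱼ Gⱼ ≤ 0` with
`Gⱼ = c²/2 δⱼ² − δⱼ Uⱼ + p(|β̂ⱼ|) − p(|β₀ⱼ|)`. When every nonzero `|β̂ⱼ|` is at least `λ`, each
`Gⱼ` is at least `−w²/(2c²)` on the support of `β₀` and nonnegative off it, while conditions
(iv) and (v) make a coordinate on which the supports of `β̂` and `β₀` disagree cost more than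
`s w²/(2c²)`; so the supports agree.

A coordinate with `0 < |β̂ⱼ| < λ` is impossible: on the segment from `0` to `λ sign β̂ⱼ` the
curvature of the penalty cancels that of the least-squares term (as `‖xⱼ‖₂² = n`), so `Q` is
affine there and, being minimal at an interior point, constant. Both endpoints are again global
minimizers with fewer such coordinates, and they cannot both have the support of `β₀`.

Once the supports agree the penalties cancel, and the basic inequality reads
`c²/2 ‖δ‖₂² ≤ c₂' √(log n / n) ‖δ‖₁ ≤ c₂' √(log n / n) √s ‖δ‖₂`; the `ℓ_q` bounds follow by
comparing norms of vectors supported on `s` coordinates.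
-/

open Finset

section HardPenalty

variable {lam t : ℝ}

lemma hardPenalty_of_lam_le (h : lam ≤ t) : hardPenalty lam t = lam ^ 2 / 2 := by
  simp [hardPenalty, max_eq_right (sub_nonpos.2 h)]

lemma hardPenalty_of_le_lam (h : t ≤ lam) : hardPenalty lam t = lam * t - t ^ 2 / 2 := by
  rw [hardPenalty, max_eq_left (sub_nonneg.2 h)]
  ring

lemma hardPenalty_zero (h : 0 ≤ lam) : hardPenalty lam 0 = 0 := by
  simp [hardPenalty_of_le_lam h]

end HardPenalty

section L0

variable {p : ℕ}

lemma l0norm_update_le {f : Fin p → ℝ} {j : Fin p} (hj : f j ≠ 0) (z : ℝ) :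
    l0norm (Function.update f j z) ≤ l0norm f := by
  refine card_le_card fun k hk => ?_
  simp only [mem_filter, mem_univ, true_and] at hk ⊢
  rcases eq_or_ne k j with rfl | hkj
  · exact hj
  · rwa [Function.update_of_ne hkj] at hk

lemma l0norm_sub_le (f g : Fin p → ℝ) : l0norm (f - g) ≤ l0norm f + l0norm g := by
  refine (card_le_card fun j hj => ?_).trans (card_union_le _ _)
  simp only [mem_filter, mem_union, mem_univ, true_and, Pi.sub_apply] at hj ⊢
  by_contra! h
  exact hj (by rw [h.1, h.2, sub_zero])

lemma sub_eq_zero_of_notMem_support {β β₀ : Fin p → ℝ} (hsupp : ∀ j, β j = 0 ↔ β₀ j = 0) :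
    ∀ j ∉ univ.filter (β₀ · ≠ 0), β j - β₀ j = 0 := fun j hj => by
  have h0 : β₀ j = 0 := by simpa using hj
  rw [(hsupp j).2 h0, h0, sub_zero]

end L0

section Norms

variable {ι : Type*} [Fintype ι] {T : Finset ι} {x : ι → ℝ}

lemma sum_abs_le_sqrt_card_mul_sqrt_sum_sq (hx : ∀ j ∉ T, x j = 0) :
    ∑ j, |x j| ≤ √(#T : ℝ) * √(∑ j, x j ^ 2) := by
  rw [← sum_subset (subset_univ T) fun j _ hj => by simp [hx j hj],
    ← sum_subset (subset_univ T) fun j _ hj => by simp [hx j hj], ← Real.sqrt_mul (by positivity)]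
  refine (le_abs_self _).trans (Real.abs_le_sqrt ?_)
  simpa using sq_sum_le_card_mul_sum_sq (s := T) (f := fun j => |x j|)

lemma rpow_sum_abs_rpow_le (hx : ∀ j ∉ T, x j = 0) {q : ℝ} (hq0 : 0 < q) (hq2 : q ≤ 2) :
    (∑ j, |x j| ^ q) ^ (1 / q) ≤ (#T : ℝ) ^ (1 / q - 1 / 2) * √(∑ j, x j ^ 2) := by
  rw [← sum_subset (subset_univ T) fun j _ hj => by simp [hx j hj, hq0.ne'],
    ← sum_subset (subset_univ T) fun j _ hj => by simp [hx j hj]]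
  have hpow : ∀ j, (|x j| ^ q) ^ (2 / q) = x j ^ 2 := fun j => by
    rw [← Real.rpow_mul (abs_nonneg _), mul_div_cancel₀ _ hq0.ne', Real.rpow_two, sq_abs]
  have hpower := Real.rpow_sum_le_const_mul_sum_rpow_of_nonneg T
    ((one_le_div hq0).2 hq2) (f := fun j => |x j| ^ q) fun j _ => by positivity
  simp only [hpow] at hpower
  have hA : 0 ≤ ∑ j ∈ T, |x j| ^ q := sum_nonneg fun j _ => by positivity
  calc (∑ j ∈ T, |x j| ^ q) ^ (1 / q)
      = ((∑ j ∈ T, |x j| ^ q) ^ (2 / q)) ^ (1 / 2 : ℝ) := by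
        rw [← Real.rpow_mul hA]; congr 1; ring
    _ ≤ ((#T : ℝ) ^ (2 / q - 1) * ∑ j ∈ T, x j ^ 2) ^ (1 / 2 : ℝ) :=
        Real.rpow_le_rpow (by positivity) hpower (by norm_num)
    _ = (#T : ℝ) ^ (1 / q - 1 / 2) * √(∑ j ∈ T, x j ^ 2) := by
        rw [Real.mul_rpow (by positivity) (sum_nonneg fun j _ => sq_nonneg _),
          ← Real.rpow_mul (by positivity), Real.sqrt_eq_rpow]
        congr 2
        ring

lemma rpow_sum_abs_rpow_le_of_sqrt_le (hx : ∀ j ∉ T, x j = 0) {A : ℝ}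
    (hA : √(∑ j, x j ^ 2) ≤ A * √(#T : ℝ)) {q : ℝ} (hq0 : 0 < q) (hq2 : q ≤ 2) :
    (∑ j, |x j| ^ q) ^ (1 / q) ≤ A * (#T : ℝ) ^ (1 / q) := by
  calc _ ≤ (#T : ℝ) ^ (1 / q - 1 / 2) * √(∑ j, x j ^ 2) := rpow_sum_abs_rpow_le hx hq0 hq2
    _ ≤ (#T : ℝ) ^ (1 / q - 1 / 2) * (A * (#T : ℝ) ^ (1 / 2 : ℝ)) := by
        rw [← Real.sqrt_eq_rpow]; gcongr
    _ = A * (#T : ℝ) ^ (1 / q) := by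
        rw [mul_left_comm, ← Real.rpow_add' (by positivity) (by simp [hq0.ne'])]
        ring_nf

end Norms

lemma sq_mul_le_inv_mul_of_mul_sqrt_le {c a b N : ℝ} (hc : 0 ≤ c) (ha : 0 ≤ a) (hb : 0 ≤ b)
    (hN : 0 ≤ N) (h : c * √a ≤ (√N)⁻¹ * √b) : c ^ 2 * a ≤ N⁻¹ * b := by
  have h2 := pow_le_pow_left₀ (by positivity) h 2
  rwa [mul_pow, mul_pow, Real.sq_sqrt ha, inv_pow, Real.sq_sqrt hN, Real.sq_sqrt hb] at h2

lemma abs_div_abs_mul_self {lam t : ℝ} (hlam : 0 ≤ lam) (ht : |t| ≠ 0) :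
    |lam / |t| * t| = lam := by
  rw [abs_mul, abs_div, abs_abs, abs_of_nonneg hlam, div_mul_cancel₀ _ ht]

section Objective

variable {n p : ℕ} (y : Fin n → ℝ) (X : Matrix (Fin n) (Fin p) ℝ) (lam : ℝ)

noncomputable def residualCorr (β : Fin p → ℝ) (j : Fin p) : ℝ :=
  (n : ℝ)⁻¹ * ∑ i, X i j * (y i - ∑ k, X i k * β k)

lemma hardObj_sub_hardObj (β β' : Fin p → ℝ) :
    hardObj y X lam β - hardObj y X lam β' =
      (2 * (n : ℝ))⁻¹ * ∑ i, (∑ k, X i k * (β k - β' k)) ^ 2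
        - ∑ k, (β k - β' k) * residualCorr y X β' k
        + ∑ k, (hardPenalty lam |β k| - hardPenalty lam |β' k|) := by
  have hres : ∀ i, y i - ∑ k, X i k * β k
      = (y i - ∑ k, X i k * β' k) - ∑ k, X i k * (β k - β' k) := fun i => by
    simp only [mul_sub, sum_sub_distrib]
    ring
  have hcross : ∑ k, (β k - β' k) * residualCorr y X β' k
      = (n : ℝ)⁻¹ * ∑ i, (y i - ∑ k, X i k * β' k) * ∑ k, X i k * (β k - β' k) := by
    simp only [residualCorr, mul_sum]
    rw [sum_comm]
    exact sum_congr rfl fun i _ => sum_congr rfl fun k _ => by ring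
  have hsq : ∑ i, (y i - ∑ k, X i k * β k) ^ 2
      = ∑ i, (y i - ∑ k, X i k * β' k) ^ 2
        - 2 * ∑ i, (y i - ∑ k, X i k * β' k) * ∑ k, X i k * (β k - β' k)
        + ∑ i, (∑ k, X i k * (β k - β' k)) ^ 2 := by
    simp only [hres, sub_sq, sum_add_distrib, sum_sub_distrib, mul_sum, mul_assoc]
  rw [hardObj, hardObj, hcross, hsq, sum_sub_distrib, mul_inv]
  ring

lemma hardObj_update_sub (hn : (n : ℝ) ≠ 0) (β : Fin p → ℝ) {j : Fin p}
    (hcol : ∑ i, X i j ^ 2 = (n : ℝ)) (z : ℝ) :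
    hardObj y X lam (Function.update β j z) - hardObj y X lam β =
      (z - β j) ^ 2 / 2 - (z - β j) * residualCorr y X β j
        + (hardPenalty lam |z| - hardPenalty lam |β j|) := by
  have hsingle : ∀ g : Fin p → ℝ → ℝ → ℝ, (∀ k a, g k a a = 0) →
      ∑ k, g k (Function.update β j z k) (β k) = g j z (β j) := fun g hg => by
    rw [sum_eq_single j (fun k _ hk => by rw [Function.update_of_ne hk, hg]) (by simp),
      Function.update_self]
  rw [hardObj_sub_hardObj, hsingle (fun k a b => (a - b) * residualCorr y X β k) (by simp),
    hsingle (fun k a b => hardPenalty lam |a| - hardPenalty lam |b|) (by simp)]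
  have hcolj : ∀ i, ∑ k, X i k * (Function.update β j z k - β k) = X i j * (z - β j) :=
    fun i => hsingle (fun k a b => X i k * (a - b)) (by simp)
  simp only [hcolj, mul_pow, ← sum_mul, hcol]
  field_simp

end Objective

section EdgeCoords

variable {p : ℕ}

noncomputable def edgeCoords (lam : ℝ) (β : Fin p → ℝ) : Finset (Fin p) :=
  univ.filter fun j => 0 < |β j| ∧ |β j| < lam

lemma edgeCoords_eq_empty_iff {lam : ℝ} {β : Fin p → ℝ} :
    edgeCoords lam β = ∅ ↔ ∀ j, β j ≠ 0 → lam ≤ |β j| := by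
  simp [edgeCoords, filter_eq_empty_iff, abs_pos]

lemma edgeCoords_update {lam z : ℝ} (hz : ¬(0 < |z| ∧ |z| < lam)) (β : Fin p → ℝ) (j : Fin p) :
    edgeCoords lam (Function.update β j z) = (edgeCoords lam β).erase j := by
  ext k
  rcases eq_or_ne k j with rfl | hkj
  · simp only [edgeCoords, Function.update_self, mem_filter, mem_univ, true_and, mem_erase,
      ne_eq, not_true_eq_false, false_and, iff_false]
    exact hz
  · simp [edgeCoords, hkj]

end EdgeCoords

section Minimizers

variable {n p : ℕ} (y : Fin n → ℝ) (X : Matrix (Fin n) (Fin p) ℝ) (lam : ℝ) {m : ℝ}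

theorem isMinOn_update_of_abs_lt (hn : (n : ℝ) ≠ 0) {β : Fin p → ℝ}
    (hβm : (l0norm β : ℝ) < m) (hβ : IsMinOn (hardObj y X lam) {β | (l0norm β : ℝ) < m} β)
    {j : Fin p} (hcol : ∑ i, X i j ^ 2 = (n : ℝ)) (hpos : 0 < |β j|) (hlt : |β j| < lam) :
    IsMinOn (hardObj y X lam) {β | (l0norm β : ℝ) < m} (Function.update β j 0) ∧
      IsMinOn (hardObj y X lam) {β | (l0norm β : ℝ) < m}
        (Function.update β j (lam / |β j| * β j)) := by
  set t := β j with ht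
  set Δ := fun z => hardObj y X lam (Function.update β j z) - hardObj y X lam β
  have hΔnonneg : ∀ z, 0 ≤ Δ z := fun z => sub_nonneg.2 <| hβ <|
    (Nat.cast_le.2 (l0norm_update_le (abs_pos.1 hpos) z)).trans_lt hβm
  have hΔ : ∀ z, |z| ≤ lam → Δ z = (z - t) ^ 2 / 2 - (z - t) * residualCorr y X β j
      + (lam * |z| - z ^ 2 / 2) - (lam * |t| - t ^ 2 / 2) := fun z hz => by
    simp only [Δ, hardObj_update_sub y X lam hn β hcol]
    rw [← ht, hardPenalty_of_le_lam hz, hardPenalty_of_le_lam hlt.le, sq_abs, sq_abs]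
    ring
  have habs := abs_div_abs_mul_self (hpos.trans hlt).le hpos.ne'
  -- `Δ` is affine on the segment from `0` to `lam / |t| * t` and vanishes at its interior
  -- point `t`.
  have haffine : (lam - |t|) * Δ 0 + |t| * Δ (lam / |t| * t) = 0 := by
    rw [hΔ 0 (by simpa using (hpos.trans hlt).le), hΔ _ habs.le, habs]
    field_simp
    ring
  have hgap : 0 < lam - |t| := sub_pos.2 hlt
  have h0 : Δ 0 = 0 := by nlinarith [hΔnonneg 0, hΔnonneg (lam / |t| * t)]
  have h1 : Δ (lam / |t| * t) = 0 := by nlinarith [hΔnonneg 0, hΔnonneg (lam / |t| * t)]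
  exact ⟨fun β' hβ' => (sub_eq_zero.1 h0).trans_le (hβ hβ'),
    fun β' hβ' => (sub_eq_zero.1 h1).trans_le (hβ hβ')⟩

theorem edgeCoords_eq_empty_of_isMinOn (hn : (n : ℝ) ≠ 0)
    (hcols : ∀ j, ∑ i, X i j ^ 2 = (n : ℝ)) (β₀ : Fin p → ℝ)
    (hsupp : ∀ β : Fin p → ℝ, (l0norm β : ℝ) < m →
      IsMinOn (hardObj y X lam) {β | (l0norm β : ℝ) < m} β → edgeCoords lam β = ∅ →
        ∀ j, β j = 0 ↔ β₀ j = 0)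
    {β : Fin p → ℝ} (hβm : (l0norm β : ℝ) < m)
    (hβ : IsMinOn (hardObj y X lam) {β | (l0norm β : ℝ) < m} β) :
    edgeCoords lam β = ∅ := by
  induction hN : (edgeCoords lam β).card using Nat.strong_induction_on generalizing β with
  | _ N ih =>
  by_contra hne
  obtain ⟨j, hj⟩ := nonempty_iff_ne_empty.2 hne
  obtain ⟨hpos, hlt⟩ : 0 < |β j| ∧ |β j| < lam := by simpa [edgeCoords] using hj
  have hzero_iff : ∀ z, (z = 0 ∨ |z| = lam) → IsMinOn (hardObj y X lam)
      {β | (l0norm β : ℝ) < m} (Function.update β j z) → (z = 0 ↔ β₀ j = 0) := by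
    intro z hz hmin
    have hfree : ¬(0 < |z| ∧ |z| < lam) := by rintro ⟨h0, h1⟩; rcases hz with rfl | h <;> simp_all
    have hcard : (edgeCoords lam (Function.update β j z)).card < N := by
      rw [edgeCoords_update hfree, ← hN]
      exact card_erase_lt_of_mem hj
    have hfeas := (Nat.cast_le.2 (l0norm_update_le (abs_pos.1 hpos) z)).trans_lt hβm
    simpa using hsupp _ hfeas hmin (ih _ hcard hfeas hmin rfl) j
  obtain ⟨hmin₀, hmin₁⟩ := isMinOn_update_of_abs_lt y X lam hn hβm hβ (hcols j) hpos hlt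
  have h₀ := hzero_iff 0 (Or.inl rfl) hmin₀
  have h₁ := hzero_iff _ (Or.inr (abs_div_abs_mul_self (hpos.trans hlt).le hpos.ne')) hmin₁
  exact mul_ne_zero (div_ne_zero (hpos.trans hlt).ne' hpos.ne') (abs_pos.1 hpos)
    (h₁.2 (h₀.1 rfl))

end Minimizers

/-- The contribution of one coordinate to the basic inequality, with `b = β₀ⱼ`, `t = β̂ⱼ` and
`u = n⁻¹ xⱼᵀ ε`. -/
noncomputable def coordExcess (c lam b t u : ℝ) : ℝ :=
  c ^ 2 / 2 * (t - b) ^ 2 - (t - b) * u + (hardPenalty lam |t| - hardPenalty lam |b|)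

section CoordExcess

variable {c lam w b t u : ℝ}

lemma neg_le_sq_mul_sub_mul (hc : 0 < c) (hu : |u| ≤ w) (d : ℝ) :
    -(w ^ 2 / (2 * c ^ 2)) ≤ c ^ 2 / 2 * d ^ 2 - d * u := by
  have hdu : d * u ≤ |d| * w :=
    (le_abs_self _).trans (by rw [abs_mul]; exact mul_le_mul_of_nonneg_left hu (abs_nonneg d))
  have hsq : c ^ 2 / 2 * d ^ 2 - |d| * w + w ^ 2 / (2 * c ^ 2)
      = (c ^ 2 * |d| - w) ^ 2 / (2 * c ^ 2) := by
    field_simp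
    rw [← sq_abs d]
    ring
  have : 0 ≤ (c ^ 2 * |d| - w) ^ 2 / (2 * c ^ 2) := by positivity
  linarith

lemma le_coordExcess (hc : 0 < c) (hu : |u| ≤ w) (ht : t ≠ 0 → lam ≤ |t|)
    (hb : b ≠ 0 → lam ≤ |b|) (hsame : t = 0 ↔ b = 0) :
    (if b = 0 then 0 else -(w ^ 2 / (2 * c ^ 2))) ≤ coordExcess c lam b t u := by
  by_cases hb0 : b = 0
  · simp [coordExcess, hb0, hsame.2 hb0]
  · have ht0 : t ≠ 0 := fun h => hb0 (hsame.1 h)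
    rw [if_neg hb0, coordExcess, hardPenalty_of_lam_le (ht ht0), hardPenalty_of_lam_le (hb hb0),
      sub_self, add_zero]
    exact neg_le_sq_mul_sub_mul hc hu _

lemma lt_coordExcess_of_not_iff (hc : 0 < c) (hu : |u| ≤ w) (hlam : 0 ≤ lam)
    (ht : t ≠ 0 → lam ≤ |t|) (hb : b ≠ 0 → lam ≤ |b|) {s : ℝ}
    (hfp : (s + 1) * (w ^ 2 / (2 * c ^ 2)) < lam ^ 2 / 2)
    (hfn : b ≠ 0 → s * (w ^ 2 / (2 * c ^ 2)) < c ^ 2 / 2 * |b| ^ 2 - w * |b| - lam ^ 2 / 2)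
    (hdiff : ¬(t = 0 ↔ b = 0)) : s * (w ^ 2 / (2 * c ^ 2)) < coordExcess c lam b t u := by
  by_cases ht0 : t = 0
  · have hb0 : b ≠ 0 := fun h => hdiff ⟨fun _ => h, fun _ => ht0⟩
    have hbu : -(|b| * w) ≤ b * u := by
      have h := mul_le_mul_of_nonneg_left hu (abs_nonneg b)
      rw [← abs_mul] at h
      linarith [neg_abs_le (b * u)]
    rw [coordExcess, ht0, hardPenalty_of_lam_le (hb hb0), abs_zero, hardPenalty_zero hlam]
    nlinarith [hfn hb0, sq_abs b]
  · have hb0 : b = 0 := by_contra fun h => hdiff ⟨fun h' => absurd h' ht0, fun h' => absurd h' h⟩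
    rw [coordExcess, hb0, hardPenalty_of_lam_le (ht ht0), abs_zero, hardPenalty_zero hlam, sub_zero]
    nlinarith [neg_le_sq_mul_sub_mul hc hu t]

end CoordExcess

section Model

variable {n p : ℕ} {y : Fin n → ℝ} {X : Matrix (Fin n) (Fin p) ℝ} {lam : ℝ} {β₀ : Fin p → ℝ}
  {ε : Fin n → ℝ} {c M : ℝ}

lemma residualCorr_of_model (hy : ∀ i, y i = ∑ k, X i k * β₀ k + ε i) (j : Fin p) :
    residualCorr y X β₀ j = (n : ℝ)⁻¹ * ∑ i, X i j * ε i := by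
  simp [residualCorr, hy]

theorem basic_inequality (hy : ∀ i, y i = ∑ k, X i k * β₀ k + ε i)
    (hSE : ∀ δ : Fin p → ℝ, (l0norm δ : ℝ) < M →
      c ^ 2 * ∑ j, δ j ^ 2 ≤ (n : ℝ)⁻¹ * ∑ i, (∑ k, X i k * δ k) ^ 2)
    {β : Fin p → ℝ} (hδ : (l0norm (β - β₀) : ℝ) < M)
    (hle : hardObj y X lam β ≤ hardObj y X lam β₀) :
    ∑ j, (c ^ 2 / 2 * (β j - β₀ j) ^ 2 + (hardPenalty lam |β j| - hardPenalty lam |β₀ j|)) ≤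
      ∑ j, (β j - β₀ j) * ((n : ℝ)⁻¹ * ∑ i, X i j * ε i) := by
  have hdiff := hardObj_sub_hardObj y X lam β β₀
  simp only [residualCorr_of_model hy, mul_inv] at hdiff
  have hse := hSE _ hδ
  simp only [Pi.sub_apply] at hse
  rw [sum_add_distrib, ← mul_sum]
  linarith

theorem support_eq_of_isMinOn_of_edgeCoords_eq_empty (hy : ∀ i, y i = ∑ k, X i k * β₀ k + ε i)
    (hc : 0 < c) (hlam : 0 ≤ lam)
    (hSE : ∀ δ : Fin p → ℝ, (l0norm δ : ℝ) < M →
      c ^ 2 * ∑ j, δ j ^ 2 ≤ (n : ℝ)⁻¹ * ∑ i, (∑ k, X i k * δ k) ^ 2)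
    (hs : (l0norm β₀ : ℝ) < M / 2) {w : ℝ} (hnoise : ∀ j, |(n : ℝ)⁻¹ * ∑ i, X i j * ε i| ≤ w)
    (hb : ∀ j, β₀ j ≠ 0 → lam ≤ |β₀ j|)
    (hfp : ((l0norm β₀ : ℝ) + 1) * (w ^ 2 / (2 * c ^ 2)) < lam ^ 2 / 2)
    (hfn : ∀ j, β₀ j ≠ 0 → (l0norm β₀ : ℝ) * (w ^ 2 / (2 * c ^ 2)) <
      c ^ 2 / 2 * |β₀ j| ^ 2 - w * |β₀ j| - lam ^ 2 / 2)
    (β : Fin p → ℝ) (hβm : (l0norm β : ℝ) < M / 2)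
    (hβ : IsMinOn (hardObj y X lam) {β | (l0norm β : ℝ) < M / 2} β)
    (hedge : edgeCoords lam β = ∅) :
    ∀ j, β j = 0 ↔ β₀ j = 0 := by
  rw [edgeCoords_eq_empty_iff] at hedge
  by_contra hne
  obtain ⟨j₀, hj₀⟩ := not_forall.1 hne
  set K := w ^ 2 / (2 * c ^ 2)
  have hK : 0 ≤ K := by positivity
  set G := fun j => coordExcess c lam (β₀ j) (β j) ((n : ℝ)⁻¹ * ∑ i, X i j * ε i)
  set L := fun j => if β₀ j = 0 then 0 else -K
  have hGsum : ∑ j, G j ≤ 0 := by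
    have hδ : (l0norm (β - β₀) : ℝ) < M := by
      have : (l0norm (β - β₀) : ℝ) ≤ l0norm β + l0norm β₀ := by exact_mod_cast l0norm_sub_le β β₀
      linarith
    have hG : ∑ j, G j = ∑ j, (c ^ 2 / 2 * (β j - β₀ j) ^ 2
        + (hardPenalty lam |β j| - hardPenalty lam |β₀ j|))
          - ∑ j, (β j - β₀ j) * ((n : ℝ)⁻¹ * ∑ i, X i j * ε i) := by
      rw [← sum_sub_distrib]
      exact sum_congr rfl fun j _ => by simp only [G, coordExcess]; ring
    linarith [basic_inequality hy hSE hδ (hβ hs)]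
  have hL_nonpos : ∀ j, L j ≤ 0 := fun j => by simp only [L]; split_ifs <;> linarith
  have hLG : ∀ j, L j ≤ G j := fun j => by
    by_cases hj : β j = 0 ↔ β₀ j = 0
    · exact le_coordExcess hc (hnoise j) (hedge j) (hb j) hj
    · have := lt_coordExcess_of_not_iff hc (hnoise j) hlam (hedge j) (hb j) hfp (hfn j) hj
      nlinarith [hL_nonpos j]
  have hLsum : ∑ j, L j = -((l0norm β₀ : ℝ) * K) := by
    simp only [L, sum_ite, sum_const_zero, sum_const, zero_add, nsmul_eq_mul, mul_neg]
    rfl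
  have hj₀ := lt_coordExcess_of_not_iff hc (hnoise j₀) hlam (hedge j₀) (hb j₀) hfp (hfn j₀) hj₀
  have hsingle : G j₀ - L j₀ ≤ ∑ j, (G j - L j) :=
    single_le_sum (f := fun j => G j - L j) (fun j _ => sub_nonneg.2 (hLG j)) (mem_univ j₀)
  rw [sum_sub_distrib, hLsum] at hsingle
  linarith [hL_nonpos j₀]

theorem sqrt_sum_sq_sub_le (hy : ∀ i, y i = ∑ k, X i k * β₀ k + ε i) (hc : 0 < c)
    (hSE : ∀ δ : Fin p → ℝ, (l0norm δ : ℝ) < M →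
      c ^ 2 * ∑ j, δ j ^ 2 ≤ (n : ℝ)⁻¹ * ∑ i, (∑ k, X i k * δ k) ^ 2)
    (hs : (l0norm β₀ : ℝ) < M / 2) {w : ℝ} (hw : 0 ≤ w)
    (hnoise : ∀ j, β₀ j ≠ 0 → |(n : ℝ)⁻¹ * ∑ i, X i j * ε i| ≤ w)
    (hb : ∀ j, β₀ j ≠ 0 → lam ≤ |β₀ j|)
    {β : Fin p → ℝ} (hβm : (l0norm β : ℝ) < M / 2)
    (hβ : IsMinOn (hardObj y X lam) {β | (l0norm β : ℝ) < M / 2} β)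
    (hlarge : ∀ j, β j ≠ 0 → lam ≤ |β j|) (hsupp : ∀ j, β j = 0 ↔ β₀ j = 0) :
    √(∑ j, (β j - β₀ j) ^ 2) ≤ 2 * c⁻¹ ^ 2 * w * √(l0norm β₀ : ℝ) := by
  have hpen : ∀ j, hardPenalty lam |β j| - hardPenalty lam |β₀ j| = 0 := fun j => by
    by_cases h0 : β₀ j = 0
    · rw [(hsupp j).2 h0, h0, sub_self]
    · have hβj : β j ≠ 0 := fun h => h0 ((hsupp j).1 h)
      rw [hardPenalty_of_lam_le (hlarge j hβj), hardPenalty_of_lam_le (hb j h0), sub_self]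
  have hδ : (l0norm (β - β₀) : ℝ) < M := by
    have : (l0norm (β - β₀) : ℝ) ≤ l0norm β + l0norm β₀ := by exact_mod_cast l0norm_sub_le β β₀
    linarith
  have hbasic := basic_inequality hy hSE hδ (hβ hs)
  simp only [hpen, add_zero, ← mul_sum] at hbasic
  have hcorr : ∑ j, (β j - β₀ j) * ((n : ℝ)⁻¹ * ∑ i, X i j * ε i) ≤ w * ∑ j, |β j - β₀ j| := by
    rw [mul_sum]
    refine sum_le_sum fun j _ => ?_
    by_cases h0 : β₀ j = 0
    · rw [(hsupp j).2 h0, h0, sub_zero, abs_zero, zero_mul, mul_zero]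
    · rw [mul_comm w]
      exact (le_abs_self _).trans
        (by rw [abs_mul]; exact mul_le_mul_of_nonneg_left (hnoise j h0) (abs_nonneg _))
  have hCS := sum_abs_le_sqrt_card_mul_sqrt_sum_sq (sub_eq_zero_of_notMem_support hsupp)
  set x := √(∑ j, (β j - β₀ j) ^ 2)
  rw [← Real.sq_sqrt (sum_nonneg fun _ _ => sq_nonneg _)] at hbasic
  have hquad : c ^ 2 / 2 * x ^ 2 ≤ w * √(l0norm β₀ : ℝ) * x := by
    calc _ ≤ _ := hbasic
      _ ≤ _ := hcorr
      _ ≤ w * (√(l0norm β₀ : ℝ) * x) := mul_le_mul_of_nonneg_left hCS hw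
      _ = _ := by ring
  rcases (show 0 ≤ x from Real.sqrt_nonneg _).eq_or_lt with hx0 | hx0
  · rw [← hx0]; positivity
  · have : c ^ 2 / 2 * x ≤ w * √(l0norm β₀ : ℝ) := le_of_mul_le_mul_right (by nlinarith) hx0
    calc x = 2 * c⁻¹ ^ 2 * (c ^ 2 / 2 * x) := by field_simp
      _ ≤ _ := by rw [mul_assoc _ w]; exact mul_le_mul_of_nonneg_left this (by positivity)

end Model

section Margins

variable {c c₂ lam s L N : ℝ}

lemma falsePositive_margin (hc : 0 < c) (hc₂ : 0 ≤ c₂) (hs : 0 ≤ s)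
    (h : c⁻¹ * c₂ * √((2 * s + 1) * L / N) < lam) :
    (s + 1) * ((c₂ * √(L / N)) ^ 2 / (2 * c ^ 2)) < lam ^ 2 / 2 := by
  set w := c₂ * √(L / N)
  set σ := √(2 * s + 1)
  have hσ : σ ^ 2 = 2 * s + 1 := Real.sq_sqrt (by linarith)
  have hlt : σ * w < c * lam := by
    rwa [mul_div_assoc, Real.sqrt_mul (by linarith),
      show c⁻¹ * c₂ * (σ * √(L / N)) = c⁻¹ * (σ * w) by ring, inv_mul_lt_iff₀ hc] at h
  have hsq : (σ * w) ^ 2 < (c * lam) ^ 2 := pow_lt_pow_left₀ hlt (by positivity) two_ne_zero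
  rw [← mul_div_assoc, div_lt_iff₀ (by positivity)]
  nlinarith [sq_nonneg w]

lemma falseNegative_margin (hc : 0 < c) (hc₂ : 0 ≤ c₂) (hs : 0 ≤ s) {b₀ b : ℝ}
    (hb₀ : b₀ > max (4 / c) 1 * c⁻¹ * c₂ * √((2 * s + 1) * L / N)) (hlam0 : 0 ≤ lam)
    (hlam : lam < b₀ * min 1 √(c ^ 2 / 2)) (hb : b₀ ≤ b) :
    s * ((c₂ * √(L / N)) ^ 2 / (2 * c ^ 2)) <
      c ^ 2 / 2 * b ^ 2 - c₂ * √(L / N) * b - lam ^ 2 / 2 := by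
  set w := c₂ * √(L / N)
  set σ := √(2 * s + 1)
  have hw : 0 ≤ w := by positivity
  have hσ : σ ^ 2 = 2 * s + 1 := Real.sq_sqrt (by linarith)
  have hσ1 : 1 ≤ σ := Real.one_le_sqrt.2 (by linarith)
  have hσs : s ≤ σ ^ 2 - σ := by nlinarith
  have hsignal : 4 * (σ * w) < c ^ 2 * b₀ := by
    rw [mul_div_assoc, Real.sqrt_mul (by linarith)] at hb₀
    have : 4 * (σ * w) / c ^ 2 < b₀ := by
      calc _ = 4 / c * (c⁻¹ * (σ * w)) := by field_simp
        _ ≤ max (4 / c) 1 * (c⁻¹ * (σ * w)) :=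
            mul_le_mul_of_nonneg_right (le_max_left _ _) (by positivity)
        _ = _ := by ring
        _ < b₀ := hb₀
    rw [div_lt_iff₀ (by positivity)] at this
    linarith
  have hb₀pos : 0 < b₀ := by nlinarith
  have hlam2 : 2 * lam ^ 2 < c ^ 2 * b₀ ^ 2 := by
    have hlt : lam < b₀ * √(c ^ 2 / 2) :=
      hlam.trans_le (mul_le_mul_of_nonneg_left (min_le_right _ _) hb₀pos.le)
    have := pow_lt_pow_left₀ hlt hlam0 two_ne_zero
    rw [mul_pow, Real.sq_sqrt (by positivity)] at this
    linarith
  have hkey : s * w ^ 2 ≤ c ^ 2 * b * (c ^ 2 * b / 2 - 2 * w) := by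
    have h1 : 4 * (σ * w) ≤ c ^ 2 * b := by nlinarith
    have h2 : 2 * (σ * w) - 2 * w ≤ c ^ 2 * b / 2 - 2 * w := by linarith
    have h3 : 0 ≤ 2 * (σ * w) - 2 * w := by nlinarith
    calc s * w ^ 2 ≤ 8 * w ^ 2 * (σ ^ 2 - σ) := by nlinarith [sq_nonneg w]
      _ = 4 * (σ * w) * (2 * (σ * w) - 2 * w) := by ring
      _ ≤ c ^ 2 * b * (c ^ 2 * b / 2 - 2 * w) :=
          mul_le_mul h1 h2 h3 ((by positivity : (0 : ℝ) ≤ 4 * (σ * w)).trans h1)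
  rw [← mul_div_assoc, div_lt_iff₀ (by positivity)]
  nlinarith [mul_le_mul_of_nonneg_left (pow_le_pow_left₀ hb₀pos.le hb 2) (sq_nonneg c)]

end Margins

theorem thresholded_regression_estimation_bounds_general
    (n p : ℕ) (hn : 2 ≤ n)
    (X : Matrix (Fin n) (Fin p) ℝ) (hcols : ∀ j, ∑ i, (X i j) ^ 2 = (n : ℝ))
    (β₀ : Fin p → ℝ) (ε y : Fin n → ℝ)
    (hy : ∀ i, y i = (∑ k, X i k * β₀ k) + ε i)
    (c c₂ M b₀ lam : ℝ) (hc : 0 < c) (hc₂ : 0 < c₂)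
    -- (i) sparse-eigenvalue (robust spark) condition with bound c for sparsity level M
    (hSE : ∀ δ : Fin p → ℝ, (l0norm δ : ℝ) < M →
      c * Real.sqrt (∑ j, (δ j) ^ 2) ≤
        (Real.sqrt n)⁻¹ * Real.sqrt (∑ i, (∑ k, X i k * δ k) ^ 2))
    -- (ii) s = ‖β₀‖₀ < M/2
    (hs : (l0norm β₀ : ℝ) < M / 2)
    -- (iii) noise bound ‖n⁻¹Xᵀε‖_∞ ≤ c₂√((log p̃)/n)
    (hnoise : ∀ j, |(n : ℝ)⁻¹ * ∑ i, X i j * ε i| ≤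
      c₂ * Real.sqrt (Real.log (max n p) / n))
    -- b₀ = min nonzero signal strength
    (hb₀ : ∀ j, β₀ j ≠ 0 → b₀ ≤ |β₀ j|)
    -- (iv) minimum signal strength condition
    (hb₀_large : b₀ > max (4 / c) 1 * c⁻¹ * c₂ *
      Real.sqrt ((2 * (l0norm β₀ : ℝ) + 1) * Real.log (max n p) / n))
    -- (v) regularization parameter range
    (hlam_low : c⁻¹ * c₂ *
      Real.sqrt ((2 * (l0norm β₀ : ℝ) + 1) * Real.log (max n p) / n) < lam)
    (hlam_high : lam < b₀ * min 1 (Real.sqrt (c ^ 2 / 2)))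
    -- noise bound on the oracle submatrix: ‖n⁻¹X₀ᵀε‖_∞ ≤ c₂′√((log n)/n)
    (c₂' : ℝ) (hc₂' : 0 < c₂')
    (hnoise' : ∀ j, β₀ j ≠ 0 → |(n : ℝ)⁻¹ * ∑ i, X i j * ε i| ≤
      c₂' * Real.sqrt (Real.log n / n))
    -- β̂ is a global minimizer of Q over S_{M/2}
    (βhat : Fin p → ℝ) (hmem : (l0norm βhat : ℝ) < M / 2)
    (hmin : ∀ β : Fin p → ℝ, (l0norm β : ℝ) < M / 2 →
      hardObj y X lam βhat ≤ hardObj y X lam β) :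
    (∀ q : ℝ, 1 ≤ q → q ≤ 2 →
      (∑ j, |βhat j - β₀ j| ^ q) ^ (1 / q) ≤
        2 * c⁻¹ ^ 2 * c₂' * (l0norm β₀ : ℝ) ^ (1 / q) * Real.sqrt (Real.log n / n)) ∧
    (∀ j, |βhat j - β₀ j| ≤
      2 * c⁻¹ ^ 2 * c₂' * Real.sqrt ((l0norm β₀ : ℝ) * Real.log n / n)) := by
  have hn0 : (n : ℝ) ≠ 0 := Nat.cast_ne_zero.2 (by omega)
  have hSE2 (δ : Fin p → ℝ) (hδ : (l0norm δ : ℝ) < M) :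
      c ^ 2 * ∑ j, δ j ^ 2 ≤ (n : ℝ)⁻¹ * ∑ i, (∑ k, X i k * δ k) ^ 2 :=
    sq_mul_le_inv_mul_of_mul_sqrt_le hc.le (by positivity) (by positivity) (by positivity)
      (hSE δ hδ)
  have hs0 : (0 : ℝ) ≤ l0norm β₀ := by positivity
  have hlam0 : 0 ≤ lam := (by positivity : (0 : ℝ) ≤ _).trans hlam_low.le
  have hb (j) (hj : β₀ j ≠ 0) : lam ≤ |β₀ j| := by
    have hb₀0 : 0 ≤ b₀ := (by positivity : (0 : ℝ) ≤ _).trans hb₀_large.le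
    nlinarith [hb₀ j hj, min_le_left 1 √(c ^ 2 / 2)]
  have hsupp := support_eq_of_isMinOn_of_edgeCoords_eq_empty hy hc hlam0 hSE2 hs hnoise hb
    (falsePositive_margin hc hc₂.le hs0 hlam_low)
    (fun j hj => falseNegative_margin hc hc₂.le hs0 hb₀_large hlam0 hlam_high (hb₀ j hj))
  have hedge := edgeCoords_eq_empty_of_isMinOn y X lam hn0 hcols β₀ hsupp hmem hmin
  have hsupp' := hsupp βhat hmem hmin hedge
  have hl2 := sqrt_sum_sq_sub_le hy hc hSE2 hs (by positivity) hnoise' hb hmem hmin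
    (edgeCoords_eq_empty_iff.1 hedge) hsupp'
  refine ⟨fun q hq1 hq2 => ?_, fun j => ?_⟩
  · calc _ ≤ 2 * c⁻¹ ^ 2 * (c₂' * √(Real.log n / n)) * (l0norm β₀ : ℝ) ^ (1 / q) :=
          rpow_sum_abs_rpow_le_of_sqrt_le (sub_eq_zero_of_notMem_support hsupp') hl2
            (by linarith) hq2
      _ = _ := by ring
  · calc |βhat j - β₀ j| ≤ √(∑ j, (βhat j - β₀ j) ^ 2) :=
          Real.abs_le_sqrt (single_le_sum (fun j _ => sq_nonneg (βhat j - β₀ j)) (mem_univ j))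
      _ ≤ _ := hl2
      _ = _ := by rw [mul_div_assoc, Real.sqrt_mul hs0]; ring

/-- Estimation loss bounds (part (c) of Theorem 1 of the paper, stated
deterministically on the noise events `E` and `E'`):
`‖β̂ − β₀‖_q ≤ 2c⁻²c₂' s^{1/q}√((log n)/n)` for `q ∈ [1,2]`, and
`‖β̂ − β₀‖_∞ ≤ 2c⁻²c₂'√(s(log n)/n)`. -/
theorem thresholded_regression_estimation_bounds
    (n p : ℕ) (hn : 2 ≤ n) (hp : 1 ≤ p) (hp' : 2 ≤ max n p)
    (X : Matrix (Fin n) (Fin p) ℝ) (hcols : ∀ j, ∑ i, (X i j) ^ 2 = (n : ℝ))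
    (β₀ : Fin p → ℝ) (ε y : Fin n → ℝ)
    (hy : ∀ i, y i = (∑ k, X i k * β₀ k) + ε i)
    (c c₂ M b₀ lam : ℝ) (hc : 0 < c) (hc₂ : 0 < c₂)
    -- (i) sparse-eigenvalue (robust spark) condition with bound c for sparsity level M
    (hSE : ∀ δ : Fin p → ℝ, (l0norm δ : ℝ) < M →
      c * Real.sqrt (∑ j, (δ j) ^ 2) ≤
        (Real.sqrt n)⁻¹ * Real.sqrt (∑ i, (∑ k, X i k * δ k) ^ 2))
    -- (ii) s = ‖β₀‖₀ < M/2
    (hs : (l0norm β₀ : ℝ) < M / 2)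
    -- (iii) noise bound ‖n⁻¹Xᵀε‖_∞ ≤ c₂√((log p̃)/n)
    (hnoise : ∀ j, |(n : ℝ)⁻¹ * ∑ i, X i j * ε i| ≤
      c₂ * Real.sqrt (Real.log (max n p) / n))
    -- b₀ = min nonzero signal strength
    (hb₀ : ∀ j, β₀ j ≠ 0 → b₀ ≤ |β₀ j|)
    -- (iv) minimum signal strength condition
    (hb₀_large : b₀ > max (4 / c) 1 * c⁻¹ * c₂ *
      Real.sqrt ((2 * (l0norm β₀ : ℝ) + 1) * Real.log (max n p) / n))
    -- (v) regularization parameter range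
    (hlam_low : c⁻¹ * c₂ *
      Real.sqrt ((2 * (l0norm β₀ : ℝ) + 1) * Real.log (max n p) / n) < lam)
    (hlam_high : lam < b₀ * min 1 (Real.sqrt (c ^ 2 / 2)))
    -- noise bound on the oracle submatrix: ‖n⁻¹X₀ᵀε‖_∞ ≤ c₂′√((log n)/n)
    (c₂' : ℝ) (hc₂' : 0 < c₂')
    (hnoise' : ∀ j, β₀ j ≠ 0 → |(n : ℝ)⁻¹ * ∑ i, X i j * ε i| ≤
      c₂' * Real.sqrt (Real.log n / n))
    -- β̂ is a global minimizer of Q over S_{M/2}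
    (βhat : Fin p → ℝ) (hmem : (l0norm βhat : ℝ) < M / 2)
    (hmin : ∀ β : Fin p → ℝ, (l0norm β : ℝ) < M / 2 →
      hardObj y X lam βhat ≤ hardObj y X lam β) :
    (∀ q : ℝ, 1 ≤ q → q ≤ 2 →
      (∑ j, |βhat j - β₀ j| ^ q) ^ (1 / q) ≤
        2 * c⁻¹ ^ 2 * c₂' * (l0norm β₀ : ℝ) ^ (1 / q) * Real.sqrt (Real.log n / n)) ∧
    (∀ j, |βhat j - β₀ j| ≤
      2 * c⁻¹ ^ 2 * c₂' * Real.sqrt ((l0norm β₀ : ℝ) * Real.log n / n)) :=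
  thresholded_regression_estimation_bounds_general n p hn X hcols β₀ ε y hy c c₂ M b₀ lam hc hc₂ hSE
    hs hnoise hb₀ hb₀_large hlam_low hlam_high c₂' hc₂' hnoise' βhat hmem hmin
end
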